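/- arXiv:1407.2481 — 9 statements merged into one kernel-verified Lean document; each statement's English description precedes it below -/
import Mathlib

section
/- Let f : ℝ² × S¹ → ℂ be smooth, supported in K × S¹ for some compact K ⊂ ℝ², and satisfy f(x,θ) = f(x,−θ) for all x,θ. If (Sf)(x,r) = 0 for all x ∈ ℝ² and r > 0, then for every ξ ∈ ℝ² \ {0} one has (ℱf)(ξ, ξ⁰) = 0 and (ℱf)(ξ, (ξ^⊥)⁰) = 0. Consequently, the transform Sf uniquely determines the values (ℱf)(ξ, ξ⁰) and (ℱf)(ξ, (ξ^⊥)⁰) for all ξ ≠ 0. -/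
open MeasureTheory Real

noncomputable section

/-- The point of the unit circle `S¹ ⊂ ℝ²` at angle `t`. -/
def circ (t : ℝ) : ℝ × ℝ := (Real.cos t, Real.sin t)

/-- Normalization `v⁰ = v / |v|` of a vector (Euclidean norm). -/
def unitize (v : ℝ × ℝ) : ℝ × ℝ := (Real.sqrt (v.1 ^ 2 + v.2 ^ 2))⁻¹ • v

/-- For `ξ = (ξ₁, ξ₂)`, the rotated vector `ξ^⊥ = (ξ₂, −ξ₁)`. -/
def perp (ξ : ℝ × ℝ) : ℝ × ℝ := (ξ.2, -ξ.1)

/-- Rigid rotation of the plane (and hence of `S¹`) by angle `θ`. -/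
def rot (θ : ℝ) (v : ℝ × ℝ) : ℝ × ℝ :=
  (Real.cos θ * v.1 - Real.sin θ * v.2, Real.sin θ * v.1 + Real.cos θ * v.2)

/-- The anisotropic spherical Radon transform
`(S f)(x, r) = ∫_{S¹} f(x + rθ, θ) ds(θ)`. -/
def radonS (f : ℝ × ℝ → ℝ × ℝ → ℂ) (x : ℝ × ℝ) (r : ℝ) : ℂ :=
  ∫ t in (0 : ℝ)..(2 * π), f (x + r • circ t) (circ t)

/-- The Fourier transform in the first variable,
`(ℱ f)(ξ, θ) = ∫_{ℝ²} e^{−i x·ξ} f(x, θ) dx`. -/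
def fourier1 (f : ℝ × ℝ → ℝ × ℝ → ℂ) (ξ θ : ℝ × ℝ) : ℂ :=
  ∫ x : ℝ × ℝ, Complex.exp (-Complex.I * ((x.1 * ξ.1 + x.2 * ξ.2 : ℝ) : ℂ)) * f x θ

/-!
Write `ξ = ρ θ(φ)` with `θ(t) = (cos t, sin t)` and put `g(u) = (ℱf)(ξ, θ(u + φ))`.
Taking the Fourier transform of `x ↦ (Sf)(x, r)` (Fubini, then translation invariance) gives
`∫_{-π}^{π} e^{i r cos u} g(u) du = 0` for every `r > 0`. Differentiating `n` times in `r` and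
letting `r → 0⁺` kills every moment `∫_{-π}^{π} cos^n u · g(u) du`. Folded onto `[0, π]`, the
function `g(u) + g(-u)` is a continuous function of `cos u` orthogonal to all polynomials in
`cos u`, hence zero by Weierstrass approximation. At `u = 0` this is `g(0) = 0`; at `u = π/2`,
the evenness of `f` makes `g` `π`-periodic and gives `g(-π/2) = 0`. Finally `θ(φ) = ξ⁰` and
`θ(φ - π/2) = (ξ^⊥)⁰`.
-/

open Set Filter Topology
open Complex (I)
open scoped Complex Pointwise

lemma periodic_circ : Function.Periodic circ (2 * π) := fun t => by
  simp [circ]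

@[fun_prop]
lemma continuous_circ : Continuous circ := by
  unfold circ; fun_prop

lemma circ_add_pi (t : ℝ) : circ (t + π) = -circ t := by
  simp [circ, Real.cos_add_pi, Real.sin_add_pi]

lemma norm_circ_le_one (t : ℝ) : ‖circ t‖ ≤ 1 :=
  norm_prod_le_iff.2
    ⟨by simpa [circ] using abs_cos_le_one t, by simpa [circ] using abs_sin_le_one t⟩

lemma exists_pos_smul_circ_eq {ξ : ℝ × ℝ} (hξ : ξ ≠ 0) :
    ∃ ρ φ : ℝ, 0 < ρ ∧ ρ • circ φ = ξ := by
  set z : ℂ := ⟨ξ.1, ξ.2⟩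
  have hz : z ≠ 0 := fun h => hξ (Prod.ext (congrArg Complex.re h) (congrArg Complex.im h))
  refine ⟨‖z‖, z.arg, norm_pos_iff.2 hz, Prod.ext ?_ ?_⟩
  · simp [circ, Complex.cos_arg hz, mul_div_cancel₀ _ (norm_ne_zero_iff.2 hz), z]
  · simp [circ, Complex.sin_arg, mul_div_cancel₀ _ (norm_ne_zero_iff.2 hz), z]

lemma unitize_smul_circ {ρ : ℝ} (hρ : 0 < ρ) (φ : ℝ) : unitize (ρ • circ φ) = circ φ := by
  have hsq : (ρ * cos φ) ^ 2 + (ρ * sin φ) ^ 2 = ρ ^ 2 := by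
    linear_combination ρ ^ 2 * sin_sq_add_cos_sq φ
  simp [unitize, circ, hsq, Real.sqrt_sq hρ.le, hρ.ne']

lemma perp_smul_circ (ρ φ : ℝ) : perp (ρ • circ φ) = ρ • circ (φ - π / 2) := by
  simp [perp, circ, Real.cos_sub_pi_div_two, Real.sin_sub_pi_div_two]

/-- The phase `x · ξ` of `fourier1`: `ℝ × ℝ` carries the sup norm and no inner product. -/
def dot (x y : ℝ × ℝ) : ℝ := x.1 * y.1 + x.2 * y.2

@[fun_prop]
lemma continuous_dot_left (y : ℝ × ℝ) : Continuous fun x => dot x y := by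
  unfold dot; fun_prop

lemma dot_add_left (x a y : ℝ × ℝ) : dot (x + a) y = dot x y + dot a y := by
  simp only [dot, Prod.fst_add, Prod.snd_add]; ring

lemma dot_smul_circ (r ρ t φ : ℝ) :
    dot (r • circ t) (ρ • circ φ) = r * ρ * cos (t - φ) := by
  simp only [dot, circ, Prod.smul_mk, smul_eq_mul, Real.cos_sub]; ring

lemma integral_intervalIntegral_swap_of_continuous {X E : Type*} [TopologicalSpace X]
    [T2Space X] [MeasurableSpace X] [BorelSpace X] {μ : Measure X} [IsFiniteMeasureOnCompacts μ]
    [SFinite μ] [NormedAddCommGroup E] [NormedSpace ℝ E] {Φ : X → ℝ → E}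
    (hΦ : Continuous (Function.uncurry Φ)) {L : Set X} (hL : IsCompact L)
    (hΦL : ∀ x ∉ L, ∀ t, Φ x t = 0) {a b : ℝ} (hab : a ≤ b) :
    ∫ x, (∫ t in a..b, Φ x t) ∂μ = ∫ t in a..b, ∫ x, Φ x t ∂μ := by
  simp only [intervalIntegral.integral_of_le hab]
  refine integral_integral_swap ?_
  rw [← Measure.restrict_univ (μ := μ), Measure.prod_restrict]
  refine (hΦ.continuousOn.integrableOn_compact (hL.prod (isCompact_Icc (a := a) (b := b))))
    |>.of_forall_sdiff_eq_zero (MeasurableSet.univ.prod measurableSet_Ioc) ?_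
  rintro ⟨x, t⟩ ⟨⟨-, ht⟩, hxt⟩
  exact hΦL x (fun hx => hxt ⟨hx, Ioc_subset_Icc_self ht⟩) t

lemma integral_add_comp_neg {E : Type*} [NormedAddCommGroup E] [NormedSpace ℝ E] {k : ℝ → E}
    (hk : Continuous k) (a : ℝ) : ∫ u in 0..a, (k u + k (-u)) = ∫ u in -a..a, k u := by
  rw [intervalIntegral.integral_add (f := k) (g := fun u => k (-u)) (hk.intervalIntegrable _ _)
    ((hk.comp continuous_neg : Continuous fun u => k (-u)).intervalIntegrable _ _),
    intervalIntegral.integral_comp_neg (fun u => k u), neg_zero, add_comm,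
    intervalIntegral.integral_add_adjacent_intervals (hk.intervalIntegrable _ _)
      (hk.intervalIntegrable _ _)]

lemma eqOn_zero_of_integral_eq_zero_of_nonneg {k : ℝ → ℝ} {a b : ℝ} (hab : a < b)
    (hk : ContinuousOn k (Icc a b)) (hk0 : ∀ u ∈ Icc a b, 0 ≤ k u)
    (h : ∫ u in a..b, k u = 0) : EqOn k 0 (Icc a b) := by
  rw [intervalIntegral.integral_of_le hab.le, ← integral_Icc_eq_integral_Ioc,
    integral_eq_zero_iff_of_nonneg_ae (ae_restrict_of_forall_mem measurableSet_Icc hk0)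
      hk.integrableOn_Icc] at h
  exact Measure.eqOn_of_ae_eq h hk continuousOn_const (closure_interior_Icc hab.ne).ge

lemma integral_polynomial_eval_cos_mul_eq_zero {k : ℝ → ℝ} (hk : ContinuousOn k (Icc 0 π))
    (hmom : ∀ n : ℕ, ∫ u in 0..π, cos u ^ n * k u = 0) (p : Polynomial ℝ) :
    ∫ u in 0..π, p.eval (cos u) * k u = 0 := by
  have hint : ∀ n : ℕ, IntervalIntegrable (fun u => cos u ^ n * k u) volume 0 π := fun n =>
    ((continuous_cos.pow n).continuousOn.mul (by rwa [uIcc_of_le pi_pos.le])).intervalIntegrable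
  simp_rw [Polynomial.eval_eq_sum_range, Finset.sum_mul, mul_assoc]
  rw [intervalIntegral.integral_finsetSum fun n _ => (hint n).const_mul _]
  simp [intervalIntegral.integral_const_mul, hmom]

/-- Through `u = arccos s`, `k` is a continuous function of `cos u`, so Weierstrass
approximation makes `k` orthogonal to itself. -/
lemma integral_sq_eq_zero_of_integral_cos_pow_mul_eq_zero {k : ℝ → ℝ}
    (hk : ContinuousOn k (Icc 0 π)) (hmom : ∀ n : ℕ, ∫ u in 0..π, cos u ^ n * k u = 0) :
    ∫ u in 0..π, k u ^ 2 = 0 := by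
  have hk_arccos : ContinuousOn (fun s => k (arccos s)) (Icc (-1) 1) :=
    hk.comp continuous_arccos.continuousOn fun s _ => ⟨arccos_nonneg s, arccos_le_pi s⟩
  have hk' : ContinuousOn k (uIcc 0 π) := by rwa [uIcc_of_le pi_pos.le]
  obtain ⟨B, hB⟩ := isCompact_Icc.exists_bound_of_continuousOn hk
  have hsmall : ∀ ε > 0, ∫ u in 0..π, k u ^ 2 ≤ ε * B * π := by
    intro ε hε
    obtain ⟨p, hp⟩ := exists_polynomial_near_of_continuousOn (-1) 1 _ hk_arccos ε hε
    have hsq : ∫ u in 0..π, k u ^ 2 = ∫ u in 0..π, (k u - p.eval (cos u)) * k u := by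
      simp_rw [sub_mul]
      rw [intervalIntegral.integral_sub, integral_polynomial_eval_cos_mul_eq_zero hk hmom,
        sub_zero]
      · simp_rw [sq]
      · exact (hk'.mul hk').intervalIntegrable
      · exact ((p.continuous.comp continuous_cos).continuousOn.mul hk').intervalIntegrable
    have hpt : ∀ u ∈ uIoc 0 π, ‖(k u - p.eval (cos u)) * k u‖ ≤ ε * B := by
      intro u hu
      rw [uIoc_of_le pi_pos.le] at hu
      have hu' : u ∈ Icc 0 π := Ioc_subset_Icc_self hu
      have hcos := hp (cos u) ⟨neg_one_le_cos u, cos_le_one u⟩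
      rw [arccos_cos hu'.1 hu'.2] at hcos
      rw [norm_mul, Real.norm_eq_abs, abs_sub_comm]
      exact mul_le_mul hcos.le (hB u hu') (norm_nonneg _) hε.le
    calc ∫ u in 0..π, k u ^ 2 ≤ ‖∫ u in 0..π, (k u - p.eval (cos u)) * k u‖ :=
          hsq ▸ le_abs_self _
      _ ≤ ε * B * |π - 0| := intervalIntegral.norm_integral_le_of_norm_le_const hpt
      _ = ε * B * π := by rw [sub_zero, abs_of_pos pi_pos]
  refine le_antisymm ?_ (intervalIntegral.integral_nonneg pi_pos.le fun u _ => sq_nonneg _)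
  refine ge_of_tendsto ?_ (eventually_nhdsWithin_of_forall (s := Ioi 0) (a := 0) hsmall)
  simpa using ((tendsto_id.mul_const B).mul_const π).mono_left
    (nhdsWithin_le_nhds (a := (0 : ℝ)) (s := Ioi 0))

lemma eqOn_zero_of_integral_cos_pow_mul_eq_zero {k : ℝ → ℝ} (hk : ContinuousOn k (Icc 0 π))
    (hmom : ∀ n : ℕ, ∫ u in 0..π, cos u ^ n * k u = 0) : EqOn k 0 (Icc 0 π) := fun u hu => by
  simpa using eqOn_zero_of_integral_eq_zero_of_nonneg pi_pos (hk.pow 2) (fun u _ => sq_nonneg _)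
    (integral_sq_eq_zero_of_integral_cos_pow_mul_eq_zero hk hmom) hu

lemma eqOn_zero_of_integral_cos_pow_smul_eq_zero {E : Type*} [NormedAddCommGroup E]
    [NormedSpace ℝ E] [CompleteSpace E] {k : ℝ → E} (hk : ContinuousOn k (Icc 0 π))
    (hmom : ∀ n : ℕ, ∫ u in 0..π, cos u ^ n • k u = 0) : EqOn k 0 (Icc 0 π) := by
  intro u hu
  refine SeparatingDual.eq_zero_of_forall_dual_eq_zero (R := ℝ) fun ℓ => ?_
  refine eqOn_zero_of_integral_cos_pow_mul_eq_zero (k := fun u => ℓ (k u))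
    (ℓ.continuous.comp_continuousOn hk) (fun n => ?_) hu
  have hint : IntervalIntegrable (fun u => cos u ^ n • k u) volume 0 π :=
    ((continuous_cos.pow n).continuousOn.smul (by rwa [uIcc_of_le pi_pos.le])).intervalIntegrable
  simpa [hmom] using ℓ.intervalIntegral_comp_comm hint

section ExpMoment

variable {a b : ℝ} {c : ℝ → ℝ} {g : ℝ → ℂ}

/-- The `n`-th derivative in `r` of `∫_a^b e^{i r c(u)} g(u) du`, up to the factor `i ^ n`. -/
def expMoment (a b : ℝ) (c : ℝ → ℝ) (g : ℝ → ℂ) (n : ℕ) (r : ℝ) : ℂ :=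
  ∫ u in a..b, (c u : ℂ) ^ n * cexp (I * ↑(r * c u)) * g u

lemma hasDerivAt_expMoment (hc : Continuous c) (hg : Continuous g) (n : ℕ) (r : ℝ) :
    HasDerivAt (expMoment a b c g n) (I * expMoment a b c g (n + 1) r) r := by
  have hcont : ∀ (m : ℕ) (s : ℝ),
      Continuous fun u => (c u : ℂ) ^ m * cexp (I * ↑(s * c u)) * g u :=
    fun m s => by fun_prop
  have hderiv : ∀ u s, HasDerivAt (fun s : ℝ => (c u : ℂ) ^ n * cexp (I * ↑(s * c u)) * g u)
      (I * ((c u : ℂ) ^ (n + 1) * cexp (I * ↑(s * c u)) * g u)) s := by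
    intro u s
    have h := ((((hasDerivAt_id s).mul_const (c u)).ofReal_comp.const_mul I).cexp.const_mul
      ((c u : ℂ) ^ n)).mul_const (g u)
    refine h.congr_deriv ?_
    simp only [id, one_mul]
    ring
  have hbound : ∀ u s, ‖I * ((c u : ℂ) ^ (n + 1) * cexp (I * ↑(s * c u)) * g u)‖ ≤
      ‖c u‖ ^ (n + 1) * ‖g u‖ := by
    intro u s
    rw [norm_mul, norm_mul, norm_mul, Complex.norm_exp_I_mul_ofReal]
    simp
  rw [expMoment, ← intervalIntegral.integral_const_mul]
  exact (intervalIntegral.hasDerivAt_integral_of_dominated_loc_of_deriv_le (μ := volume)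
    (a := a) (b := b) (x₀ := r) (s := univ) univ_mem
    (Eventually.of_forall fun s => (hcont n s).aestronglyMeasurable)
    ((hcont n r).intervalIntegrable _ _)
    (continuous_const.mul (hcont (n + 1) r)).aestronglyMeasurable
    (Eventually.of_forall fun u _ s _ => hbound u s)
    ((by fun_prop : Continuous fun u => ‖c u‖ ^ (n + 1) * ‖g u‖).intervalIntegrable _ _)
    (Eventually.of_forall fun u _ s _ => hderiv u s)).2

lemma expMoment_eq_zero_of_forall_pos (hc : Continuous c) (hg : Continuous g)
    (h : ∀ r > 0, expMoment a b c g 0 r = 0) (n : ℕ) : expMoment a b c g n 0 = 0 := by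
  have hpos : ∀ n, ∀ r > 0, expMoment a b c g n r = 0 := by
    intro n
    induction n with
    | zero => exact h
    | succ n ih =>
      intro r hr
      have hloc : expMoment a b c g n =ᶠ[𝓝 r] fun _ => 0 :=
        eventually_of_mem (Ioi_mem_nhds hr) ih
      simpa using (hasDerivAt_expMoment hc hg n r).unique
        ((hasDerivAt_const r (0 : ℂ)).congr_of_eventuallyEq hloc)
  have hcont : Continuous (expMoment a b c g n) :=
    continuous_iff_continuousAt.2 fun r => (hasDerivAt_expMoment hc hg n r).continuousAt
  have hclosed : IsClosed {r | expMoment a b c g n r = 0} := isClosed_eq hcont continuous_const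
  exact (hclosed.closure_subset_iff (s := Ioi 0)).2 (fun r hr => hpos n r hr)
    (by simp [closure_Ioi])

lemma integral_pow_mul_eq_zero_of_integral_exp_mul_eq_zero (hc : Continuous c)
    (hg : Continuous g) (h : ∀ r > 0, ∫ u in a..b, cexp (I * ↑(r * c u)) * g u = 0) (n : ℕ) :
    ∫ u in a..b, (c u : ℂ) ^ n * g u = 0 := by
  simpa [expMoment] using
    expMoment_eq_zero_of_forall_pos hc hg (fun r hr => by simpa [expMoment] using h r hr) n

end ExpMoment

section FourierRadon

variable {f : ℝ × ℝ → ℝ × ℝ → ℂ} {K : Set (ℝ × ℝ)}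

lemma integral_exp_dot_mul_add_right (g : ℝ × ℝ → ℂ) (ξ a : ℝ × ℝ) :
    ∫ x, cexp (-I * dot x ξ) * g (x + a) =
      cexp (I * dot a ξ) * ∫ x, cexp (-I * dot x ξ) * g x := by
  rw [← integral_add_right_eq_self (fun x => cexp (-I * dot x ξ) * g x) a,
    ← integral_const_mul]
  congr 1 with x
  rw [dot_add_left, ← mul_assoc, ← Complex.exp_add]
  push_cast
  ring_nf

lemma continuous_fourier1_circ (hf : Continuous fun p : (ℝ × ℝ) × ℝ => f p.1 (circ p.2))
    (hK : IsCompact K) (hsupp : ∀ x ∉ K, ∀ t : ℝ, f x (circ t) = 0) (ξ : ℝ × ℝ) :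
    Continuous fun t => fourier1 f ξ (circ t) := by
  have hK_eq : ∀ t, fourier1 f ξ (circ t) = ∫ x in K, cexp (-I * dot x ξ) * f x (circ t) :=
    fun t => (setIntegral_eq_integral_of_forall_compl_eq_zero fun x hx => by
      rw [hsupp x hx t, mul_zero]).symm
  simp only [hK_eq]
  refine continuous_parametric_integral_of_continuous ?_ hK
  exact Continuous.mul (by fun_prop) (hf.comp (f := Prod.swap) continuous_swap)

lemma integral_exp_dot_mul_radonS (hf : Continuous fun p : (ℝ × ℝ) × ℝ => f p.1 (circ p.2))
    (hK : IsCompact K) (hsupp : ∀ x ∉ K, ∀ t : ℝ, f x (circ t) = 0) (ξ : ℝ × ℝ) (r : ℝ) :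
    ∫ x, cexp (-I * dot x ξ) * radonS f x r =
      ∫ t in (0 : ℝ)..2 * π, cexp (I * dot (r • circ t) ξ) * fourier1 f ξ (circ t) := by
  have hL : IsCompact (K + Metric.closedBall (0 : ℝ × ℝ) |r|) :=
    hK.add (isCompact_closedBall _ _)
  have hvanish : ∀ x ∉ K + Metric.closedBall (0 : ℝ × ℝ) |r|, ∀ t,
      f (x + r • circ t) (circ t) = 0 := by
    refine fun x hx t => hsupp _ (fun hxK => hx ⟨_, hxK, -(r • circ t), ?_,
      add_neg_cancel_right _ _⟩) t
    simpa [norm_smul] using mul_le_of_le_one_right (abs_nonneg r) (norm_circ_le_one t)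
  simp only [radonS, ← intervalIntegral.integral_const_mul]
  rw [integral_intervalIntegral_swap_of_continuous ?_ hL
    (fun x hx t => by rw [hvanish x hx t, mul_zero]) Real.two_pi_pos.le]
  · refine intervalIntegral.integral_congr fun t _ => ?_
    exact integral_exp_dot_mul_add_right (fun x => f x (circ t)) ξ (r • circ t)
  · exact Continuous.mul (by fun_prop)
      (hf.comp (f := fun p : (ℝ × ℝ) × ℝ => (p.1 + r • circ p.2, p.2)) (by fun_prop))

lemma integral_exp_mul_fourier1_eq_zero
    (hf : Continuous fun p : (ℝ × ℝ) × ℝ => f p.1 (circ p.2))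
    (hK : IsCompact K) (hsupp : ∀ x ∉ K, ∀ t : ℝ, f x (circ t) = 0)
    (hS : ∀ x : ℝ × ℝ, ∀ r : ℝ, 0 < r → radonS f x r = 0) {ρ : ℝ} (hρ : 0 < ρ) (φ : ℝ)
    {r : ℝ} (hr : 0 < r) :
    ∫ u in -π..π, cexp (I * ↑(r * cos u)) * fourier1 f (ρ • circ φ) (circ (u + φ)) = 0 := by
  set F : ℝ → ℂ := fun t => cexp (I * ↑(r * cos (t - φ))) * fourier1 f (ρ • circ φ) (circ t)
  have hF : Function.Periodic F (2 * π) := fun t => by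
    simp only [F, add_sub_right_comm, cos_add_two_pi, periodic_circ t]
  have hradon := integral_exp_dot_mul_radonS hf hK hsupp (ρ • circ φ) (r / ρ)
  simp only [hS _ _ (div_pos hr hρ), mul_zero, integral_zero, dot_smul_circ,
    div_mul_cancel₀ r hρ.ne'] at hradon
  calc ∫ u in -π..π, cexp (I * ↑(r * cos u)) * fourier1 f (ρ • circ φ) (circ (u + φ))
      = ∫ u in -π..π, F (u + φ) := by simp only [F, add_sub_cancel_right]
    _ = ∫ t in -π + φ..-π + φ + 2 * π, F t := by
      rw [intervalIntegral.integral_comp_add_right]; ring_nf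
    _ = ∫ t in 0..0 + 2 * π, F t := hF.intervalIntegral_add_eq _ _
    _ = 0 := by rw [zero_add]; exact hradon.symm

end FourierRadon

/-- **Vanishing Fourier data from a vanishing anisotropic spherical Radon transform.**
For `f : ℝ² × S¹ → ℂ` smooth, supported in `K × S¹` with `K` compact, and even in the
second variable, if `(S f)(x, r) = 0` for all `x ∈ ℝ²` and all `r > 0`, then for every
`ξ ≠ 0` both `(ℱ f)(ξ, ξ⁰) = 0` and `(ℱ f)(ξ, (ξ^⊥)⁰) = 0`; consequently the transform
`S f` uniquely determines these Fourier values. -/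
theorem radon_determines_fourier_values
    (f : ℝ × ℝ → ℝ × ℝ → ℂ)
    (hf : ContDiff ℝ (⊤ : ℕ∞) (fun p : (ℝ × ℝ) × ℝ => f p.1 (circ p.2)))
    (K : Set (ℝ × ℝ)) (hK : IsCompact K)
    (hsupp : ∀ x ∉ K, ∀ t : ℝ, f x (circ t) = 0)
    (heven : ∀ x : ℝ × ℝ, ∀ t : ℝ, f x (-(circ t)) = f x (circ t))
    (hS : ∀ x : ℝ × ℝ, ∀ r : ℝ, 0 < r → radonS f x r = 0) :
    ∀ ξ : ℝ × ℝ, ξ ≠ 0 →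
      fourier1 f ξ (unitize ξ) = 0 ∧ fourier1 f ξ (unitize (perp ξ)) = 0 := by
  intro ξ hξ
  obtain ⟨ρ, φ, hρ, rfl⟩ := exists_pos_smul_circ_eq hξ
  set g : ℝ → ℂ := fun u => fourier1 f (ρ • circ φ) (circ (u + φ))
  have hg : Continuous g :=
    (continuous_fourier1_circ hf.continuous hK hsupp _).comp (continuous_add_const φ)
  have hg_pi : ∀ u, g (u + π) = g u := fun u => by
    simp only [g, add_right_comm u π φ, circ_add_pi, fourier1, heven]
  have hmom : ∀ n : ℕ, ∫ u in 0..π, cos u ^ n • (g u + g (-u)) = 0 := fun n => by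
    have hpow := integral_pow_mul_eq_zero_of_integral_exp_mul_eq_zero continuous_cos hg
      (fun r hr => integral_exp_mul_fourier1_eq_zero hf.continuous hK hsupp hS hρ φ hr) n
    rw [← integral_add_comp_neg (by fun_prop)] at hpow
    simpa [smul_add, Complex.real_smul] using hpow
  have hsym := eqOn_zero_of_integral_cos_pow_smul_eq_zero
    (hg.add (hg.comp continuous_neg)).continuousOn hmom
  have h0 : g 0 = 0 := by simpa using hsym ⟨le_rfl, pi_pos.le⟩
  have h1 : g (-(π / 2)) = 0 := by
    have hpi : g (π / 2) = g (-(π / 2)) :=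
      (congrArg g (by ring : π / 2 = -(π / 2) + π)).trans (hg_pi _)
    simpa [hpi] using hsym (show π / 2 ∈ Icc 0 π from ⟨by positivity, by linarith [pi_pos]⟩)
  rw [unitize_smul_circ hρ, perp_smul_circ, unitize_smul_circ hρ]
  exact ⟨by simpa [g] using h0, by simpa [g, sub_eq_neg_add] using h1⟩

end
end

section
/- Let A, A' : ℝ² → ℝ^{2×2} be smooth compactly supported fields of symmetric matrices, and define f_A(x,θ) = ⟨θ, A(x)θ⟩ and f_{A'}(x,θ) = ⟨θ, A'(x)θ⟩ for x ∈ ℝ², θ ∈ S¹. If (S f_A)(x,r) = (S f_{A'})(x,r) for all x ∈ ℝ² and r > 0, then tr A(x) = tr A'(x) for every x ∈ ℝ². -/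
/-!
The transform depends continuously on the radius `r`, and at `r = 0` it degenerates to the
mean of the quadratic form over the circle at the single point `x`, which is `π · tr A(x)`.
So equality for all `r > 0` passes to `r = 0` and yields equality of the traces.
-/

open MeasureTheory Real Matrix

noncomputable section

/-- The quadratic-form symbol `f_A(x, θ) = ⟨θ, A(x) θ⟩` associated with a matrix field. -/
def quadF (A : ℝ × ℝ → Matrix (Fin 2) (Fin 2) ℝ) (x : ℝ × ℝ) (v : ℝ × ℝ) : ℂ :=
  ((![v.1, v.2] ⬝ᵥ (A x).mulVec ![v.1, v.2] : ℝ) : ℂ)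

lemma quadF_eq (A : ℝ × ℝ → Matrix (Fin 2) (Fin 2) ℝ) (x v : ℝ × ℝ) :
    quadF A x v = ((v.1 * (A x 0 0 * v.1 + A x 0 1 * v.2)
      + v.2 * (A x 1 0 * v.1 + A x 1 1 * v.2) : ℝ) : ℂ) := by
  simp [quadF, dotProduct, Matrix.mulVec, Fin.sum_univ_two]

lemma continuous_uncurry_quadF {A : ℝ × ℝ → Matrix (Fin 2) (Fin 2) ℝ}
    (hA : ∀ i j, Continuous fun x => A x i j) : Continuous (Function.uncurry (quadF A)) := by
  have := hA 0 0; have := hA 0 1; have := hA 1 0; have := hA 1 1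
  simp only [Function.uncurry_def, quadF_eq]
  fun_prop

lemma continuous_radonS {f : ℝ × ℝ → ℝ × ℝ → ℂ} (hf : Continuous (Function.uncurry f))
    (x : ℝ × ℝ) : Continuous (radonS f x) := by
  unfold radonS circ
  apply intervalIntegral.continuous_parametric_intervalIntegral_of_continuous'
  exact hf.comp (f := fun p : ℝ × ℝ => (x + p.1 • (cos p.2, sin p.2), (cos p.2, sin p.2)))
    (by fun_prop)

lemma radonS_zero (f : ℝ × ℝ → ℝ × ℝ → ℂ) (x : ℝ × ℝ) :
    radonS f x 0 = ∫ t in (0 : ℝ)..(2 * π), f x (circ t) := by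
  simp [radonS]

lemma integral_quadForm_circ (M : Matrix (Fin 2) (Fin 2) ℝ) :
    ∫ t in (0 : ℝ)..(2 * π), cos t * (M 0 0 * cos t + M 0 1 * sin t)
      + sin t * (M 1 0 * cos t + M 1 1 * sin t) = π * M.trace := by
  have hexpand : ∀ t : ℝ, cos t * (M 0 0 * cos t + M 0 1 * sin t)
      + sin t * (M 1 0 * cos t + M 1 1 * sin t)
      = M 0 0 * cos t ^ 2 + (M 0 1 + M 1 0) * (sin t * cos t) + M 1 1 * sin t ^ 2 := by
    intro t; ring
  have hcos2 : IntervalIntegrable (fun t => M 0 0 * cos t ^ 2) volume 0 (2 * π) := by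
    apply Continuous.intervalIntegrable; fun_prop
  have hsc : IntervalIntegrable (fun t => (M 0 1 + M 1 0) * (sin t * cos t)) volume 0 (2 * π) := by
    apply Continuous.intervalIntegrable; fun_prop
  have hsin2 : IntervalIntegrable (fun t => M 1 1 * sin t ^ 2) volume 0 (2 * π) := by
    apply Continuous.intervalIntegrable; fun_prop
  simp only [hexpand]
  rw [intervalIntegral.integral_add (hcos2.add hsc) hsin2, intervalIntegral.integral_add hcos2 hsc,
    intervalIntegral.integral_const_mul, intervalIntegral.integral_const_mul,
    intervalIntegral.integral_const_mul, integral_cos_sq, integral_sin_sq,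
    integral_sin_mul_cos₁, Matrix.trace_fin_two]
  simp only [sin_two_pi, cos_two_pi, sin_zero, cos_zero]
  ring

lemma radonS_quadF_zero (A : ℝ × ℝ → Matrix (Fin 2) (Fin 2) ℝ) (x : ℝ × ℝ) :
    radonS (quadF A) x 0 = ((π * (A x).trace : ℝ) : ℂ) := by
  simp only [radonS_zero, quadF_eq, circ, intervalIntegral.integral_ofReal,
    integral_quadForm_circ]

theorem radon_determines_trace_general
    (A A' : ℝ × ℝ → Matrix (Fin 2) (Fin 2) ℝ)
    (hA : ∀ i j, ContDiff ℝ (⊤ : ℕ∞) (fun x => A x i j))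
    (hA' : ∀ i j, ContDiff ℝ (⊤ : ℕ∞) (fun x => A' x i j))
    (h : ∀ x : ℝ × ℝ, ∀ r : ℝ, 0 < r → radonS (quadF A) x r = radonS (quadF A') x r) :
    ∀ x : ℝ × ℝ, (A x).trace = (A' x).trace := by
  intro x
  have hcont : Continuous (radonS (quadF A) x) :=
    continuous_radonS (continuous_uncurry_quadF fun i j => (hA i j).continuous) x
  have hcont' : Continuous (radonS (quadF A') x) :=
    continuous_radonS (continuous_uncurry_quadF fun i j => (hA' i j).continuous) x
  have heq : Set.EqOn (radonS (quadF A) x) (radonS (quadF A') x) (closure (Set.Ioi 0)) :=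
    Set.EqOn.closure (fun r hr => h x r hr) hcont hcont'
  have hzero := heq (by simp : (0 : ℝ) ∈ closure (Set.Ioi 0))
  rw [radonS_quadF_zero, radonS_quadF_zero] at hzero
  exact mul_left_cancel₀ pi_ne_zero (Complex.ofReal_injective hzero)

/-- **The trace of a symmetric matrix field is determined by the anisotropic spherical
Radon transform of its quadratic form.** If `A, A'` are smooth compactly supported
symmetric matrix fields whose quadratic forms have the same anisotropic spherical Radon
transform for all centers and all positive radii, then `tr A(x) = tr A'(x)` everywhere. -/
theorem radon_determines_trace
    (A A' : ℝ × ℝ → Matrix (Fin 2) (Fin 2) ℝ)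
    (hA : ∀ i j, ContDiff ℝ (⊤ : ℕ∞) (fun x => A x i j))
    (hA' : ∀ i j, ContDiff ℝ (⊤ : ℕ∞) (fun x => A' x i j))
    (hAc : ∀ i j, HasCompactSupport (fun x => A x i j))
    (hA'c : ∀ i j, HasCompactSupport (fun x => A' x i j))
    (hAs : ∀ x, (A x).IsSymm) (hA's : ∀ x, (A' x).IsSymm)
    (h : ∀ x : ℝ × ℝ, ∀ r : ℝ, 0 < r → radonS (quadF A) x r = radonS (quadF A') x r) :
    ∀ x : ℝ × ℝ, (A x).trace = (A' x).trace :=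
  radon_determines_trace_general A A' hA hA' h

end
end

section
/- Let h : [−1,1] → ℂ be continuous and suppose ∫_{−1}^{1} t^{2j} h(t) dt = 0 for every integer j ≥ 0. Then h is odd, i.e. h(−t) = −h(t) for every t ∈ [−1,1]. -/
/-!
The function `g t = h t + h (-t)` is continuous and all its moments `∫ t ^ n * g t` vanish: the
substitution `t ↦ -t` shows that they equal `(1 + (-1) ^ n) * ∫ t ^ n * h t`, which is twice an even
moment of `h` for even `n` and zero for odd `n`. A continuous function with vanishing moments is
zero by Weierstrass approximation: if `p` is a polynomial uniformly close to `w`, then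
`∫ w * w = ∫ (w - p) * w` is small. Complex-valued functions reduce to their real and imaginary
parts.
-/

open MeasureTheory Set Polynomial intervalIntegral Filter Topology

section Moments

variable {a b : ℝ}

theorem integral_eval_mul_eq_zero_of_forall_integral_pow_mul_eq_zero (hab : a ≤ b) {w : ℝ → ℝ}
    (hw : ContinuousOn w (Icc a b)) (hm : ∀ n : ℕ, ∫ t in a..b, t ^ n * w t = 0) (p : ℝ[X]) :
    ∫ t in a..b, p.eval t * w t = 0 := by
  have hint (n : ℕ) : IntervalIntegrable (fun t => t ^ n * w t) volume a b :=
    ((continuous_pow n).continuousOn.mul hw).intervalIntegrable_of_Icc hab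
  simp_rw [eval_eq_sum_range, Finset.sum_mul, mul_assoc]
  rw [integral_finsetSum fun i _ => (hint i).const_mul _]
  exact Finset.sum_eq_zero fun i _ => by rw [intervalIntegral.integral_const_mul, hm i, mul_zero]

theorem integral_mul_self_eq_zero_of_forall_integral_eval_mul_eq_zero (hab : a ≤ b)
    {w : ℝ → ℝ} (hw : ContinuousOn w (Icc a b))
    (hp : ∀ p : ℝ[X], ∫ t in a..b, p.eval t * w t = 0) :
    ∫ t in a..b, w t * w t = 0 := by
  obtain ⟨C, hC⟩ := isCompact_Icc.exists_bound_of_continuousOn hw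
  have hbound : ∀ ε > 0, |∫ t in a..b, w t * w t| ≤ ε * C * |b - a| := by
    intro ε hε
    obtain ⟨p, hp_near⟩ := exists_polynomial_near_of_continuousOn a b w hw ε hε
    have hsplit : ∫ t in a..b, w t * w t = ∫ t in a..b, (w t - p.eval t) * w t := by
      have hww : IntervalIntegrable (fun t => w t * w t) volume a b :=
        (hw.mul hw).intervalIntegrable_of_Icc hab
      have hpw : IntervalIntegrable (fun t => p.eval t * w t) volume a b :=
        (p.continuousOn.mul hw).intervalIntegrable_of_Icc hab
      simp_rw [sub_mul]
      rw [integral_sub hww hpw, hp p, sub_zero]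
    rw [hsplit, ← Real.norm_eq_abs]
    refine norm_integral_le_of_norm_le_const fun t ht => ?_
    have ht' : t ∈ Icc a b := Ioc_subset_Icc_self (uIoc_of_le hab ▸ ht)
    rw [norm_mul]
    exact mul_le_mul (by simpa [abs_sub_comm] using (hp_near t ht').le) (hC t ht') (norm_nonneg _)
      hε.le
  have hlim : Tendsto (fun ε => ε * C * |b - a|) (𝓝[>] 0) (𝓝 0) := by
    simpa using (((tendsto_id (x := 𝓝 (0 : ℝ))).mul_const C).mul_const |b - a|).mono_left
      nhdsWithin_le_nhds
  exact abs_nonpos_iff.mp (ge_of_tendsto hlim (eventually_nhdsWithin_of_forall hbound))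

theorem eqOn_zero_of_integral_mul_self_eq_zero (hab : a < b) {w : ℝ → ℝ}
    (hw : ContinuousOn w (Icc a b)) (h0 : ∫ t in a..b, w t * w t = 0) :
    EqOn w 0 (Icc a b) := by
  intro c hc
  by_contra hwc
  exact (integral_pos hab (hw.mul hw) (fun t _ => mul_self_nonneg _)
    ⟨c, hc, mul_self_pos.mpr hwc⟩).ne' h0

theorem eqOn_zero_of_forall_integral_pow_mul_eq_zero (hab : a < b) {w : ℝ → ℝ}
    (hw : ContinuousOn w (Icc a b)) (hm : ∀ n : ℕ, ∫ t in a..b, t ^ n * w t = 0) :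
    EqOn w 0 (Icc a b) :=
  eqOn_zero_of_integral_mul_self_eq_zero hab hw <|
    integral_mul_self_eq_zero_of_forall_integral_eval_mul_eq_zero hab.le hw <|
      integral_eval_mul_eq_zero_of_forall_integral_pow_mul_eq_zero hab.le hw hm

theorem eqOn_zero_of_forall_integral_ofReal_pow_mul_eq_zero {𝕜 : Type*} [RCLike 𝕜]
    (hab : a < b) {f : ℝ → 𝕜} (hf : ContinuousOn f (Icc a b))
    (hm : ∀ n : ℕ, ∫ t in a..b, (t : 𝕜) ^ n * f t = 0) :
    EqOn f 0 (Icc a b) := by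
  have hint (n : ℕ) : IntervalIntegrable (fun t => (t : 𝕜) ^ n * f t) volume a b :=
    (((RCLike.continuous_ofReal.pow n).continuousOn).mul hf).intervalIntegrable_of_Icc hab.le
  have hre := eqOn_zero_of_forall_integral_pow_mul_eq_zero hab
    (RCLike.continuous_re.comp_continuousOn hf) fun n => by
      have := intervalIntegral_re (hint n)
      rw [hm n, map_zero] at this
      simpa only [← RCLike.ofReal_pow, RCLike.re_ofReal_mul, Function.comp_apply] using this
  have him := eqOn_zero_of_forall_integral_pow_mul_eq_zero hab
    (RCLike.continuous_im.comp_continuousOn hf) fun n => by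
      have := intervalIntegral_im (hint n)
      rw [hm n, map_zero] at this
      simpa only [← RCLike.ofReal_pow, RCLike.im_ofReal_mul, Function.comp_apply] using this
  exact fun t ht => RCLike.ext (by simpa using hre ht) (by simpa using him ht)

end Moments

theorem integral_pow_mul_add_comp_neg {𝕜 : Type*} [RCLike 𝕜] {f : ℝ → 𝕜} {c : ℝ} (n : ℕ)
    (hf : IntervalIntegrable (fun t => (t : 𝕜) ^ n * f t) volume (-c) c) :
    ∫ t in -c..c, (t : 𝕜) ^ n * (f t + f (-t)) =
      (1 + (-1) ^ n) * ∫ t in -c..c, (t : 𝕜) ^ n * f t := by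
  have hpow (t : ℝ) : (t : 𝕜) ^ n * f (-t) = (-1) ^ n * ((-t : ℝ) ^ n * f (-t)) := by
    push_cast
    rw [neg_pow (t : 𝕜), ← mul_assoc, ← mul_assoc, ← mul_pow, neg_one_mul, neg_neg, one_pow,
      one_mul]
  have hf' : IntervalIntegrable (fun t => (t : 𝕜) ^ n * f (-t)) volume (-c) c := by
    have := (IntervalIntegrable.iff_comp_neg (f := fun t => (t : 𝕜) ^ n * f t)).mp hf
    simpa only [neg_neg, ← hpow] using this.symm.const_mul ((-1) ^ n)
  have hneg :
      ∫ t in -c..c, (t : 𝕜) ^ n * f (-t) = (-1) ^ n * ∫ t in -c..c, (t : 𝕜) ^ n * f t := by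
    simp_rw [hpow, intervalIntegral.integral_const_mul]
    rw [integral_comp_neg (fun t => (t : 𝕜) ^ n * f t), neg_neg]
  simp_rw [mul_add]
  rw [integral_add hf hf', hneg, add_mul, one_mul]

/-- **Vanishing even moments force oddness.** If `h : [−1,1] → ℂ` is continuous and all
its even moments `∫_{−1}^{1} t^{2j} h(t) dt` vanish, then `h(−t) = −h(t)` on `[−1,1]`. -/
theorem vanishing_even_moments_implies_odd
    (h : ℝ → ℂ) (hc : ContinuousOn h (Set.Icc (-1 : ℝ) 1))
    (hm : ∀ j : ℕ, (∫ t in (-1 : ℝ)..1, (t : ℂ) ^ (2 * j) * h t) = 0) :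
    ∀ t ∈ Set.Icc (-1 : ℝ) 1, h (-t) = -h t := by
  have hneg : MapsTo Neg.neg (Icc (-1 : ℝ) 1) (Icc (-1) 1) := fun t ⟨h₁, h₂⟩ =>
    ⟨neg_le_neg h₂, by linarith⟩
  have hsym : ContinuousOn (fun t => h t + h (-t)) (Icc (-1) 1) :=
    hc.add (hc.comp continuousOn_neg hneg)
  have hsym_moments (n : ℕ) : ∫ t in (-1 : ℝ)..1, (t : ℂ) ^ n * (h t + h (-t)) = 0 := by
    have hint : IntervalIntegrable (fun t => (t : ℂ) ^ n * h t) volume (-1) 1 :=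
      ((Complex.continuous_ofReal.pow n).continuousOn.mul hc).intervalIntegrable_of_Icc
        (by norm_num)
    -- the coercion `(t : ℂ)` is `Complex.ofReal`, the general lemmas use `RCLike.ofReal`
    rw [← RCLike.ofReal_eq_complex_ofReal] at hm ⊢ hint
    rw [integral_pow_mul_add_comp_neg n hint]
    obtain ⟨j, rfl | rfl⟩ := Nat.even_or_odd' n
    · rw [hm j, mul_zero]
    · rw [(odd_two_mul_add_one j).neg_one_pow, add_neg_cancel, zero_mul]
  intro t ht
  exact eq_neg_of_add_eq_zero_right <|
    eqOn_zero_of_forall_integral_ofReal_pow_mul_eq_zero (by norm_num) hsym hsym_moments ht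
end

section
/- Let g : ℝ → ℂ be continuous and π-periodic, i.e. g(θ+π) = g(θ) for all θ ∈ ℝ, and suppose ∫₀^{2π} e^{i r cos θ} g(θ) dθ = 0 for every r ≥ 0. Then g(π/2 − θ) = −g(π/2 + θ) for every θ ∈ [0, π/2]. -/
/-!
The function `z ↦ ∫₀^{2π} exp (i z cos θ) g θ dθ` is entire, with Taylor coefficients
`iⁿ / n! · ∫₀^{2π} cosⁿ θ g θ dθ`. It vanishes on `[0, ∞)`, hence identically, so all these
moments vanish. By `π`-periodicity the even moments are `2 ∫₀^{π/2} (cos² θ)ᵏ (g θ + g (π - θ)) dθ`.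
As `cos²` is injective on `[0, π/2]`, polynomials in `cos²` are dense in `C([0, π/2])`
(Stone–Weierstrass), which forces `g θ + g (π - θ) = 0` on `[0, π/2]`.
-/

open MeasureTheory Real Filter Topology Set
open scoped Nat

theorem eq_zero_of_hasSum_mul_pow_of_frequently_eq_zero {𝕜 : Type*} [NontriviallyNormedField 𝕜]
    [CompleteSpace 𝕜] {c : ℕ → 𝕜} {f : 𝕜 → 𝕜}
    (hf : ∀ z, HasSum (fun n => c n * z ^ n) (f z)) (h0 : ∃ᶠ z in 𝓝[≠] 0, f z = 0) :
    c = 0 := by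
  set p := FormalMultilinearSeries.ofScalars 𝕜 c
  have hrad : p.radius = ⊤ := by
    refine ENNReal.eq_top_of_forall_nnreal_le fun r => ?_
    obtain ⟨z, hz⟩ := NormedField.exists_lt_norm 𝕜 r
    refine le_trans ?_ (p.le_radius_of_tendsto (r := ‖z‖₊) (l := 0) ?_)
    · exact_mod_cast hz.le
    · simpa [p, FormalMultilinearSeries.ofScalars_norm] using
        (hf z).summable.tendsto_atTop_zero.norm
  have hp : HasFPowerSeriesAt f p 0 :=
    ⟨⊤, hrad.ge, ENNReal.zero_lt_top, fun {y} _ => by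
      simpa [p, FormalMultilinearSeries.ofScalars_apply_eq, mul_comm] using hf y⟩
  by_contra hc
  exact h0 (hp.locally_ne_zero ((FormalMultilinearSeries.ofScalars_series_eq_zero 𝕜).not.mpr hc))

theorem hasSum_intervalIntegral_cexp_mul {f : ℝ → ℝ} {h : ℝ → ℂ} (hf : Continuous f)
    (hh : Continuous h) (a b : ℝ) (z : ℂ) :
    HasSum (fun n : ℕ => z ^ n / n ! * ∫ x in a..b, (f x : ℂ) ^ n * h x)
      (∫ x in a..b, Complex.exp (z * f x) * h x) := by
  have hterm : ∀ n : ℕ, z ^ n / n ! * ∫ x in a..b, (f x : ℂ) ^ n * h x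
      = ∫ x in a..b, (z * f x) ^ n / n ! * h x := by
    intro n
    rw [← intervalIntegral.integral_const_mul]
    congr 1 with x
    ring
  simp_rw [hterm]
  have hbound : ∀ x, HasSum (fun n : ℕ => (‖z‖ * |f x|) ^ n / n ! * ‖h x‖)
      (Real.exp (‖z‖ * |f x|) * ‖h x‖) := fun x => by
    simpa only [← Real.exp_eq_exp_ℝ] using
      (NormedSpace.expSeries_div_hasSum_exp (‖z‖ * |f x|)).mul_right ‖h x‖
  refine intervalIntegral.hasSum_integral_of_dominated_convergence
    (fun n x => (‖z‖ * |f x|) ^ n / n ! * ‖h x‖)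
    (fun n => (by fun_prop : Continuous _).aestronglyMeasurable) (fun n => ae_of_all _ ?_)
    (ae_of_all _ fun x _ => (hbound x).summable) ?_ (ae_of_all _ fun x _ => ?_)
  · intro x _
    simp [norm_pow, Complex.norm_real]
  · simp_rw [fun x => (hbound x).tsum_eq]
    exact (by fun_prop : Continuous _).intervalIntegrable _ _
  · simpa only [← Complex.exp_eq_exp_ℂ] using
      (NormedSpace.expSeries_div_hasSum_exp (z * f x)).mul_right (h x)

theorem intervalIntegral_pow_mul_eq_zero_of_frequently {f : ℝ → ℝ} {h : ℝ → ℂ}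
    (hf : Continuous f) (hh : Continuous h) {a b : ℝ}
    (h0 : ∃ᶠ r in 𝓝[≠] (0 : ℝ),
      ∫ x in a..b, Complex.exp (Complex.I * ((r * f x : ℝ) : ℂ)) * h x = 0) (n : ℕ) :
    ∫ x in a..b, (f x : ℂ) ^ n * h x = 0 := by
  set F : ℂ → ℂ := fun z => ∫ x in a..b, Complex.exp (Complex.I * z * f x) * h x
  have hF : ∀ z, HasSum (fun n : ℕ =>
      Complex.I ^ n / n ! * (∫ x in a..b, (f x : ℂ) ^ n * h x) * z ^ n) (F z) := fun z => by
    convert hasSum_intervalIntegral_cexp_mul hf hh a b (Complex.I * z) using 1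
    ext n
    ring
  have hofReal : Tendsto ((↑) : ℝ → ℂ) (𝓝[≠] 0) (𝓝[≠] 0) :=
    tendsto_nhdsWithin_iff.mpr ⟨Complex.continuous_ofReal.continuousWithinAt.tendsto.trans
      (by simp), eventually_nhdsWithin_of_forall fun r hr => by simpa using hr⟩
  have hF0 : ∃ᶠ z in 𝓝[≠] 0, F z = 0 :=
    hofReal.frequently (h0.mono fun r hr => by simpa [F, mul_assoc] using hr)
  simpa [Complex.I_ne_zero, Nat.factorial_ne_zero] using
    congrFun (eq_zero_of_hasSum_mul_pow_of_frequently_eq_zero hF hF0) n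

theorem intervalIntegral_eval_mul_eq_zero_of_forall_pow_mul_eq_zero {a b : ℝ} {f u : ℝ → ℝ}
    (hf : ContinuousOn f (uIcc a b)) (hu : ContinuousOn u (uIcc a b))
    (hmom : ∀ k : ℕ, ∫ x in a..b, f x ^ k * u x = 0) (p : Polynomial ℝ) :
    ∫ x in a..b, p.eval (f x) * u x = 0 := by
  simp only [Polynomial.eval_eq_sum_range, Finset.sum_mul, mul_assoc]
  rw [intervalIntegral.integral_finsetSum fun i _ =>
    (by fun_prop : ContinuousOn _ _).intervalIntegrable]
  simp [intervalIntegral.integral_const_mul, hmom]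

theorem continuous_intervalIntegral_projIcc_mul {a b : ℝ} (hab : a ≤ b) {u : ℝ → ℝ}
    (hu : ContinuousOn u (Icc a b)) :
    Continuous fun F : C(Icc a b, ℝ) => ∫ x in a..b, F (projIcc a b hab x) * u x := by
  have hproj : Continuous (projIcc a b hab) := continuous_projIcc
  have hu' : Continuous fun x => u (projIcc a b hab x) :=
    hu.comp_continuous (continuous_subtype_val.comp hproj) fun x => (projIcc a b hab x).2
  have hcongr : ∀ F : C(Icc a b, ℝ), ∫ x in a..b, F (projIcc a b hab x) * u x
      = ∫ x in a..b, F (projIcc a b hab x) * u (projIcc a b hab x) := fun F =>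
    intervalIntegral.integral_congr fun x hx => by
      simp [projIcc_of_mem hab (uIcc_of_le hab ▸ hx)]
  simp_rw [hcongr]
  exact intervalIntegral.continuous_parametric_intervalIntegral_of_continuous'
    ((continuous_eval.comp (continuous_fst.prodMk (hproj.comp continuous_snd))).mul
      (hu'.comp continuous_snd)) a b

theorem intervalIntegral_mul_eq_zero_of_forall_pow_mul_eq_zero {a b : ℝ} (hab : a ≤ b)
    {f u : ℝ → ℝ} (hf : ContinuousOn f (Icc a b)) (hinj : InjOn f (Icc a b))
    (hu : ContinuousOn u (Icc a b)) (hmom : ∀ k : ℕ, ∫ x in a..b, f x ^ k * u x = 0)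
    (F : C(Icc a b, ℝ)) : ∫ x in a..b, F (projIcc a b hab x) * u x = 0 := by
  let f' : C(Icc a b, ℝ) := ⟨(Icc a b).domRestrict f, hf.domRestrict⟩
  set A := Algebra.adjoin ℝ ({f'} : Set C(Icc a b, ℝ)) with hA
  have hsep : A.SeparatesPoints := fun x y hxy =>
    ⟨f', ⟨f', Algebra.self_mem_adjoin_singleton ℝ f', rfl⟩,
      fun h => hxy (Subtype.ext (hinj x.2 y.2 h))⟩
  have hvanish : ∀ G ∈ A, ∫ x in a..b, G (projIcc a b hab x) * u x = 0 := by
    intro G hG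
    rw [hA, Algebra.adjoin_singleton_eq_range_aeval] at hG
    obtain ⟨p, rfl⟩ := hG
    rw [← intervalIntegral_eval_mul_eq_zero_of_forall_pow_mul_eq_zero
      (uIcc_of_le hab ▸ hf) (uIcc_of_le hab ▸ hu) hmom p]
    refine intervalIntegral.integral_congr fun x hx => ?_
    simp [f', Polynomial.aeval_continuousMap_apply, projIcc_of_mem hab (uIcc_of_le hab ▸ hx)]
  have hclosed : IsClosed {G : C(Icc a b, ℝ) | ∫ x in a..b, G (projIcc a b hab x) * u x = 0} :=
    isClosed_eq (continuous_intervalIntegral_projIcc_mul hab hu) continuous_const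
  have hF : F ∈ A.topologicalClosure :=
    (ContinuousMap.subalgebra_topologicalClosure_eq_top_of_separatesPoints A hsep).symm ▸
      Algebra.mem_top
  rw [← SetLike.mem_coe, Subalgebra.topologicalClosure_coe] at hF
  exact hclosed.closure_subset_iff.mpr hvanish hF

theorem eqOn_zero_of_forall_intervalIntegral_pow_mul_eq_zero {a b : ℝ} (hab : a < b)
    {f u : ℝ → ℝ} (hf : ContinuousOn f (Icc a b)) (hinj : InjOn f (Icc a b))
    (hu : ContinuousOn u (Icc a b)) (hmom : ∀ k : ℕ, ∫ x in a..b, f x ^ k * u x = 0) :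
    EqOn u 0 (Icc a b) := by
  have hsq : ∫ x in a..b, u x ^ 2 = 0 := by
    rw [← intervalIntegral_mul_eq_zero_of_forall_pow_mul_eq_zero hab.le hf hinj hu hmom
      ⟨(Icc a b).domRestrict u, hu.domRestrict⟩]
    refine intervalIntegral.integral_congr fun x hx => ?_
    simp [projIcc_of_mem hab.le (uIcc_of_le hab.le ▸ hx), sq]
  intro c hc
  by_contra hne
  exact (intervalIntegral.integral_pos hab (hu.pow 2) (fun x _ => sq_nonneg _)
    ⟨c, hc, pow_two_pos_of_ne_zero hne⟩).ne' hsq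

theorem Complex.eqOn_zero_of_forall_intervalIntegral_pow_mul_eq_zero {a b : ℝ} (hab : a < b)
    {f : ℝ → ℝ} {u : ℝ → ℂ} (hf : ContinuousOn f (Icc a b)) (hinj : InjOn f (Icc a b))
    (hu : ContinuousOn u (Icc a b)) (hmom : ∀ k : ℕ, ∫ x in a..b, (f x : ℂ) ^ k * u x = 0) :
    EqOn u 0 (Icc a b) := by
  have hint : ∀ k : ℕ, IntervalIntegrable (fun x => (f x : ℂ) ^ k * u x) volume a b := fun k =>
    ContinuousOn.intervalIntegrable (by rw [uIcc_of_le hab.le]; fun_prop)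
  have hre := _root_.eqOn_zero_of_forall_intervalIntegral_pow_mul_eq_zero hab hf hinj
    (Complex.continuous_re.comp_continuousOn hu) fun k => by
      simpa only [RCLike.re_to_complex, ← Complex.ofReal_pow, Complex.re_ofReal_mul,
        Complex.zero_re, Function.comp_apply] using
        (intervalIntegral.intervalIntegral_re (hint k)).trans (congrArg Complex.re (hmom k))
  have him := _root_.eqOn_zero_of_forall_intervalIntegral_pow_mul_eq_zero hab hf hinj
    (Complex.continuous_im.comp_continuousOn hu) fun k => by
      simpa only [RCLike.im_to_complex, ← Complex.ofReal_pow, Complex.im_ofReal_mul,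
        Complex.zero_im, Function.comp_apply] using
        (intervalIntegral.intervalIntegral_im (hint k)).trans (congrArg Complex.im (hmom k))
  exact fun x hx => Complex.ext (hre hx) (him hx)

theorem intervalIntegral_add_comp_sub_eq {E : Type*} [NormedAddCommGroup E] [NormedSpace ℝ E]
    {f : ℝ → E} {a b : ℝ} (hf : IntervalIntegrable f volume a b) :
    ∫ x in a..(a + b) / 2, (f x + f (a + b - x)) = ∫ x in a..b, f x := by
  have hm : (a + b) / 2 ∈ uIcc a b := by
    rcases le_total a b with h | h
    · exact uIcc_of_le h ▸ ⟨by linarith, by linarith⟩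
    · exact uIcc_of_ge h ▸ ⟨by linarith, by linarith⟩
  have h1 : IntervalIntegrable f volume a ((a + b) / 2) := hf.mono_set (uIcc_subset_uIcc_left hm)
  have h2 : IntervalIntegrable f volume ((a + b) / 2) b := hf.mono_set (uIcc_subset_uIcc_right hm)
  have h2' : IntervalIntegrable (fun x => f (a + b - x)) volume a ((a + b) / 2) := by
    simpa [show a + b - (a + b) / 2 = (a + b) / 2 by ring] using h2.symm.comp_sub_left (a + b)
  rw [intervalIntegral.integral_add h1 h2', intervalIntegral.integral_comp_sub_left,
    ← intervalIntegral.integral_add_adjacent_intervals h1 h2]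
  congr 2 <;> ring

theorem two_mul_intervalIntegral_cos_sq_pow_mul_add_comp_pi_sub {g : ℝ → ℂ} (hg : Continuous g)
    (hper : Function.Periodic g π) (k : ℕ) :
    2 * ∫ x in 0..π / 2, ((cos x ^ 2 : ℝ) : ℂ) ^ k * (g x + g (π - x))
      = ∫ x in 0..2 * π, (cos x : ℂ) ^ (2 * k) * g x := by
  set F : ℝ → ℂ := fun x => (cos x : ℂ) ^ (2 * k) * g x
  have hF : ∀ c d, IntervalIntegrable F volume c d := fun c d =>
    (by fun_prop : Continuous F).intervalIntegrable c d
  have hFper : Function.Periodic F π := fun x => by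
    simp only [F, cos_add_pi, hper x, Complex.ofReal_neg, (even_two_mul k).neg_pow]
  have hdouble := hFper.intervalIntegral_add_zsmul_eq 2 0 hF
  simp only [zero_add, two_zsmul, ← two_mul] at hdouble
  rw [hdouble, ← intervalIntegral_add_comp_sub_eq (hF 0 π)]
  simp only [F, zero_add, cos_pi_sub, Complex.ofReal_neg, (even_two_mul k).neg_pow]
  congr 2 with x
  push_cast
  ring

theorem injOn_cos_sq : InjOn (fun x => cos x ^ 2) (Icc 0 (π / 2)) := fun x hx y hy hxy =>
  injOn_cos ⟨hx.1, by linarith [hx.2, pi_pos]⟩ ⟨hy.1, by linarith [hy.2, pi_pos]⟩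
    ((sq_eq_sq₀ (cos_nonneg_of_mem_Icc ⟨by linarith [hx.1, pi_pos], hx.2⟩)
      (cos_nonneg_of_mem_Icc ⟨by linarith [hy.1, pi_pos], hy.2⟩)).mp hxy)

/-- **Vanishing oscillatory integrals force antisymmetry about `π/2`.** If `g : ℝ → ℂ` is
continuous and `π`-periodic and `∫₀^{2π} e^{i r cos θ} g(θ) dθ = 0` for every `r ≥ 0`,
then `g(π/2 − θ) = −g(π/2 + θ)` for every `θ ∈ [0, π/2]`. -/
theorem oscillatory_vanishing_implies_antisymmetric
    (g : ℝ → ℂ) (hg : Continuous g) (hper : ∀ θ : ℝ, g (θ + π) = g θ)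
    (hint : ∀ r : ℝ, 0 ≤ r →
      (∫ θ in (0 : ℝ)..(2 * π),
        Complex.exp (Complex.I * ((r * Real.cos θ : ℝ) : ℂ)) * g θ) = 0) :
    ∀ θ ∈ Set.Icc (0 : ℝ) (π / 2), g (π / 2 - θ) = -g (π / 2 + θ) := by
  have hmom : ∀ n : ℕ, ∫ x in 0..2 * π, (cos x : ℂ) ^ n * g x = 0 :=
    intervalIntegral_pow_mul_eq_zero_of_frequently continuous_cos hg
      ((eventually_nhdsWithin_of_forall (s := Ioi 0) fun r hr => hint r (le_of_lt hr)).frequently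
        |>.filter_mono (nhdsWithin_mono _ fun r (hr : 0 < r) => hr.ne'))
  have hfold : ∀ k : ℕ, ∫ x in 0..π / 2, ((cos x ^ 2 : ℝ) : ℂ) ^ k * (g x + g (π - x)) = 0 :=
    fun k => by
      have h := two_mul_intervalIntegral_cos_sq_pow_mul_add_comp_pi_sub hg hper k
      rw [hmom] at h
      simpa using h
  have hsym := Complex.eqOn_zero_of_forall_intervalIntegral_pow_mul_eq_zero
    (by positivity) (by fun_prop) injOn_cos_sq (by fun_prop) hfold
  intro θ hθ
  have := @hsym (π / 2 - θ) ⟨by linarith [hθ.2], by linarith [hθ.1]⟩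
  simp only [Pi.zero_apply, show π - (π / 2 - θ) = π / 2 + θ by ring] at this
  exact eq_neg_of_add_eq_zero_left this
end

section
/- Let 0 < a ≤ b and let g : ℝ → ℂ be continuous with support contained in [a,b]. If ∫_a^b g(r) r^{−2j} dr = 0 for every integer j ≥ 1, then g = 0 identically. -/
/-!
Write `h r = g r / r²` and `ψ r = r⁻²`. The hypothesis says that every moment
`∫_a^b h ψⁿ` (`n ≥ 0`) vanishes, hence so does `∫_a^b h · p(ψ)` for every real polynomial `p`.
Since `ψ` is injective on `[a, b]`, the polynomials in `ψ` form a subalgebra of `C([a, b], ℝ)`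
that separates points, so by Stone–Weierstrass they are dense; as `f ↦ ∫_a^b h f` is continuous,
`h` is orthogonal to every continuous function. Testing against `r² ḡ(r)` gives
`∫_a^b |g|² = 0`, and a continuous nonnegative function with zero integral vanishes.
-/

open MeasureTheory Polynomial Set

section

variable {a b : ℝ} {h : ℝ → ℂ} {ψ : ℝ → ℝ}

theorem continuous_intervalIntegral_mul_projIcc (hab : a ≤ b) (hh : ContinuousOn h (Icc a b)) :
    Continuous fun F : C(Icc a b, ℝ) => ∫ r in a..b, h r * F (projIcc a b hab r) := by
  have hproj : Continuous fun r => h (projIcc a b hab r) :=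
    hh.comp_continuous continuous_projIcc.subtype_val fun r => (projIcc a b hab r).2
  have heval : Continuous fun p : C(Icc a b, ℝ) × ℝ => p.1 (projIcc a b hab p.2) :=
    continuous_fst.eval (continuous_projIcc.comp continuous_snd)
  have key : (fun F : C(Icc a b, ℝ) => ∫ r in a..b, h r * F (projIcc a b hab r)) =
      fun F => ∫ r in a..b, h (projIcc a b hab r) * F (projIcc a b hab r) := by
    funext F
    refine intervalIntegral.integral_congr fun r hr => ?_
    rw [uIcc_of_le hab] at hr
    simp [projIcc_of_mem hab hr]
  rw [key]
  exact intervalIntegral.continuous_parametric_intervalIntegral_of_continuous'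
    ((hproj.comp continuous_snd).mul (Complex.continuous_ofReal.comp heval)) a b

theorem intervalIntegral_mul_eval_eq_zero_of_moments (hh : ContinuousOn h (uIcc a b))
    (hψ : ContinuousOn ψ (uIcc a b)) (hmom : ∀ n : ℕ, ∫ r in a..b, h r * (ψ r ^ n : ℝ) = 0)
    (p : ℝ[X]) : ∫ r in a..b, h r * (p.eval (ψ r) : ℝ) = 0 := by
  induction p using Polynomial.induction_on' with
  | add p q hp hq =>
    have hint : ∀ s : ℝ[X],
        IntervalIntegrable (fun r => h r * ((s.eval (ψ r) : ℝ) : ℂ)) volume a b :=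
      fun s => (hh.mul (Complex.continuous_ofReal.comp_continuousOn
        (s.continuous.comp_continuousOn hψ))).intervalIntegrable
    simp only [eval_add, Complex.ofReal_add, mul_add]
    rw [intervalIntegral.integral_add (hint p) (hint q), hp, hq, add_zero]
  | monomial n c =>
    simp only [eval_monomial, Complex.ofReal_mul, mul_left_comm _ (c : ℂ)]
    rw [intervalIntegral.integral_const_mul, hmom n, mul_zero]

theorem intervalIntegral_mul_ofReal_eq_zero_of_moments (hab : a ≤ b)
    (hh : ContinuousOn h (Icc a b)) (hψ : ContinuousOn ψ (Icc a b)) (hψinj : InjOn ψ (Icc a b))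
    (hmom : ∀ n : ℕ, ∫ r in a..b, h r * (ψ r ^ n : ℝ) = 0)
    {f : ℝ → ℝ} (hf : ContinuousOn f (Icc a b)) : ∫ r in a..b, h r * (f r : ℂ) = 0 := by
  set L : C(Icc a b, ℝ) → ℂ := fun F => ∫ r in a..b, h r * F (projIcc a b hab r)
  have hL : ∀ {k : ℝ → ℝ} (hk : ContinuousOn k (Icc a b)),
      L ⟨(Icc a b).domRestrict k, hk.domRestrict⟩ = ∫ r in a..b, h r * (k r : ℂ) := by
    intro k hk
    refine intervalIntegral.integral_congr fun r hr => ?_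
    rw [uIcc_of_le hab] at hr
    simp only [projIcc_of_mem hab hr]
    rfl
  set Ψ : C(Icc a b, ℝ) := ⟨(Icc a b).domRestrict ψ, hψ.domRestrict⟩
  have hsep : (Algebra.adjoin ℝ {Ψ}).SeparatesPoints := fun x y hxy =>
    ⟨Ψ, ⟨Ψ, Algebra.self_mem_adjoin_singleton ℝ Ψ, rfl⟩,
      fun hΨxy => hxy (Subtype.ext (hψinj x.2 y.2 hΨxy))⟩
  have hA : (Algebra.adjoin ℝ {Ψ} : Set C(Icc a b, ℝ)) ⊆ L ⁻¹' {0} := by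
    intro F hF
    rw [SetLike.mem_coe, Algebra.adjoin_singleton_eq_range_aeval] at hF
    obtain ⟨p, rfl⟩ := hF
    have hp : ContinuousOn (fun r => p.eval (ψ r)) (Icc a b) := p.continuous.comp_continuousOn hψ
    have hΨp : aeval Ψ p = ⟨(Icc a b).domRestrict (fun r => p.eval (ψ r)), hp.domRestrict⟩ := by
      ext x
      exact aeval_continuousMap_apply p Ψ x
    change L (aeval Ψ p) = 0
    rw [hΨp, hL hp]
    rw [← uIcc_of_le hab] at hh hψ
    exact intervalIntegral_mul_eval_eq_zero_of_moments hh hψ hmom p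
  have hclosed : IsClosed (L ⁻¹' {0}) :=
    isClosed_singleton.preimage (continuous_intervalIntegral_mul_projIcc hab hh)
  have hdense : closure (Algebra.adjoin ℝ {Ψ} : Set C(Icc a b, ℝ)) = univ := by
    rw [← Subalgebra.topologicalClosure_coe,
      ContinuousMap.subalgebra_topologicalClosure_eq_top_of_separatesPoints _ hsep,
      Algebra.coe_top]
  rw [← hL hf]
  exact closure_minimal hA hclosed (hdense ▸ mem_univ _)

theorem intervalIntegral_mul_eq_zero_of_moments (hab : a ≤ b) (hh : ContinuousOn h (Icc a b))
    (hψ : ContinuousOn ψ (Icc a b)) (hψinj : InjOn ψ (Icc a b))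
    (hmom : ∀ n : ℕ, ∫ r in a..b, h r * (ψ r ^ n : ℝ) = 0)
    {k : ℝ → ℂ} (hk : ContinuousOn k (Icc a b)) : ∫ r in a..b, h r * k r = 0 := by
  have hint : ∀ {f : ℝ → ℝ}, ContinuousOn f (Icc a b) →
      IntervalIntegrable (fun r => h r * (f r : ℂ)) volume a b := fun hf =>
    (hh.mul (Complex.continuous_ofReal.comp_continuousOn hf)).intervalIntegrable_of_Icc hab
  have hre : ContinuousOn (fun r => (k r).re) (Icc a b) :=
    Complex.continuous_re.comp_continuousOn hk
  have him : ContinuousOn (fun r => (k r).im) (Icc a b) :=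
    Complex.continuous_im.comp_continuousOn hk
  calc ∫ r in a..b, h r * k r
      = ∫ r in a..b, (h r * ((k r).re : ℂ) + Complex.I * (h r * ((k r).im : ℂ))) := by
        congr 1 with r
        conv_lhs => rw [← Complex.re_add_im (k r)]
        ring
    _ = 0 := by
      rw [intervalIntegral.integral_add (hint hre) ((hint him).const_mul _),
        intervalIntegral.integral_const_mul,
        intervalIntegral_mul_ofReal_eq_zero_of_moments hab hh hψ hψinj hmom hre,
        intervalIntegral_mul_ofReal_eq_zero_of_moments hab hh hψ hψinj hmom him]
      ring

theorem eq_zero_of_intervalIntegral_eq_zero {F : ℝ → ℝ} (hab : a ≤ b) (hF : Continuous F)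
    (hF0 : 0 ≤ F) (hsupp : ∀ r ∉ Icc a b, F r = 0) (hint : ∫ r in a..b, F r = 0) : F = 0 := by
  funext r
  by_contra hr
  have hpos := hF.integral_pos_of_hasCompactSupport_nonneg_nonzero (μ := volume)
    (HasCompactSupport.intro isCompact_Icc hsupp) hF0 hr
  rw [← setIntegral_eq_integral_of_forall_compl_eq_zero hsupp, integral_Icc_eq_integral_Ioc,
    ← intervalIntegral.integral_of_le hab, hint] at hpos
  exact lt_irrefl 0 hpos

end

/-- **Vanishing negative even moments force vanishing.** If `g : ℝ → ℂ` is continuous with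
support in `[a,b] ⊂ (0,∞)` and `∫_a^b g(r) r^{−2j} dr = 0` for every integer `j ≥ 1`,
then `g = 0` identically. -/
theorem vanishing_negative_even_moments
    (a b : ℝ) (ha : 0 < a) (hab : a ≤ b)
    (g : ℝ → ℂ) (hg : Continuous g) (hsupp : ∀ r ∉ Set.Icc a b, g r = 0)
    (hm : ∀ j : ℕ, 1 ≤ j → (∫ r in a..b, g r / (r : ℂ) ^ (2 * j)) = 0) :
    ∀ r : ℝ, g r = 0 := by
  have hpos : ∀ r ∈ Icc a b, 0 < r := fun r hr => ha.trans_le hr.1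
  have hh : ContinuousOn (fun r : ℝ => g r / (r : ℂ) ^ 2) (Icc a b) :=
    hg.continuousOn.div (by fun_prop) fun r hr => by exact_mod_cast (pow_pos (hpos r hr) 2).ne'
  have hψ : ContinuousOn (fun r : ℝ => (r ^ 2)⁻¹) (Icc a b) :=
    (continuous_pow 2).continuousOn.inv₀ fun r hr => (pow_pos (hpos r hr) 2).ne'
  have hψinj : InjOn (fun r : ℝ => (r ^ 2)⁻¹) (Icc a b) := fun r hr s hs hrs =>
    (pow_left_inj₀ (hpos r hr).le (hpos s hs).le two_ne_zero).1 (inv_inj.1 hrs)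
  have hmom : ∀ n : ℕ, ∫ r in a..b, g r / (r : ℂ) ^ 2 * (((r ^ 2)⁻¹ ^ n : ℝ) : ℂ) = 0 := by
    intro n
    rw [← hm (n + 1) (by omega)]
    congr 1 with r
    push_cast
    ring
  have hnormSq : ∫ r in a..b, Complex.normSq (g r) = 0 := by
    have hk : ContinuousOn (fun r : ℝ => (r : ℂ) ^ 2 * (starRingEnd ℂ) (g r)) (Icc a b) := by
      fun_prop
    rw [← Complex.ofReal_eq_zero, ← intervalIntegral.integral_ofReal,
      ← intervalIntegral_mul_eq_zero_of_moments hab hh hψ hψinj hmom hk]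
    refine intervalIntegral.integral_congr fun r hr => ?_
    rw [uIcc_of_le hab] at hr
    have hr0 : (r : ℂ) ≠ 0 := by exact_mod_cast (hpos r hr).ne'
    rw [← Complex.mul_conj]
    field_simp
  have hzero := eq_zero_of_intervalIntegral_eq_zero hab (Complex.continuous_normSq.comp hg)
    (fun r => Complex.normSq_nonneg _) (fun r hr => by simp [hsupp r hr]) hnormSq
  exact fun r => Complex.normSq_eq_zero.1 (congrFun hzero r)
end

section
/- Let 0 < a ≤ b and let g : ℝ → ℂ be continuous with support contained in [a,b]. Suppose there exists a nonempty open interval (c,d) ⊂ (0,∞) such that ∫_a^b g(r) (r² + h²)^{−2} dr = 0 for every h ∈ (c,d). Then g = 0 identically. -/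
/-!
Write `W_n(h) = ∫ (r² + h²)⁻ⁿ g(r) dr`. Differentiating under the integral sign gives
`W_n' (h) = -2nh W_{n+1}(h)`, so the vanishing of `W_2` on an open set of nonzero parameters
propagates to every `W_n` with `n ≥ 2`. Fix one such `h` and put `u(r) = (r² + h²)⁻¹`: then `u² g`
is orthogonal to every polynomial in `u`. As `u` is injective on `[0, ∞)`, Stone–Weierstrass makes
these polynomials uniformly dense on the support of `g`, so (after testing against continuous
linear functionals) `∫ (u² g)² = 0`, whence `g = 0`.
-/

open MeasureTheory Set Polynomial

theorem intervalIntegral_eq_integral_of_forall_notMem_Icc {E : Type*} [NormedAddCommGroup E]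
    [NormedSpace ℝ E] {f : ℝ → E} {a b : ℝ} (hf : ∀ x ∉ Icc a b, f x = 0) :
    ∫ x in a..b, f x = ∫ x, f x := by
  rcases le_or_gt a b with hab | hba
  · rw [intervalIntegral.integral_of_le hab, ← integral_Icc_eq_integral_Ioc,
      setIntegral_eq_integral_of_forall_compl_eq_zero hf]
  · have hf0 : f = 0 := funext fun x => hf x (by simp [hba.not_ge])
    simp [hf0]

section Density

variable {α : Type*} [TopologicalSpace α]

theorem exists_polynomial_near_comp_of_injOn {K : Set α} (hK : IsCompact K) {f u : α → ℝ}
    (hf : ContinuousOn f K) (hu : ContinuousOn u K) (hinj : InjOn u K) {ε : ℝ} (hε : 0 < ε) :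
    ∃ q : ℝ[X], ∀ x ∈ K, |f x - q.eval (u x)| < ε := by
  have : CompactSpace K := isCompact_iff_compactSpace.mp hK
  let U : C(K, ℝ) := ⟨K.domRestrict u, hu.domRestrict⟩
  have hsep : (Algebra.adjoin ℝ {U}).SeparatesPoints := fun x y hxy =>
    ⟨U, ⟨U, Algebra.subset_adjoin rfl, rfl⟩, fun h => hxy (Subtype.ext (hinj x.2 y.2 h))⟩
  obtain ⟨⟨p, hp⟩, hpf⟩ :=
    ContinuousMap.exists_mem_subalgebra_near_continuous_of_separatesPoints _ hsep
      (K.domRestrict f) hf.domRestrict ε hε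
  rw [Algebra.adjoin_singleton_eq_range_aeval] at hp
  obtain ⟨q, rfl⟩ := hp
  refine ⟨q, fun x hx => ?_⟩
  simpa [abs_sub_comm, U] using hpf ⟨x, hx⟩

variable [MeasurableSpace α] [OpensMeasurableSpace α] {μ : Measure α}
  [IsFiniteMeasureOnCompacts μ] [μ.IsOpenPosMeasure]

theorem eq_zero_of_forall_integral_eval_mul_eq_zero {w u : α → ℝ} (hw : Continuous w)
    (hwc : HasCompactSupport w) (hu : Continuous u) (hinj : InjOn u (tsupport w))
    (horth : ∀ q : ℝ[X], ∫ x, q.eval (u x) * w x ∂μ = 0) : w = 0 := by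
  have hint : ∀ v : α → ℝ, Continuous v → Integrable (fun x => v x * w x) μ := fun v hv =>
    (hv.mul hw).integrable_of_hasCompactSupport hwc.mul_left
  set C := ∫ x, |w x| ∂μ
  have hbound : ∀ ε > 0, ∫ x, w x * w x ∂μ ≤ ε * C := by
    intro ε hε
    obtain ⟨q, hq⟩ := exists_polynomial_near_comp_of_injOn hwc.isCompact hw.continuousOn
      hu.continuousOn hinj hε
    calc ∫ x, w x * w x ∂μ = ∫ x, (w x - q.eval (u x)) * w x ∂μ := by
          simp only [sub_mul]
          rw [integral_sub (hint w hw) (hint _ (by fun_prop)), horth, sub_zero]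
      _ ≤ ∫ x, ε * |w x| ∂μ := by
          refine integral_mono (hint _ (by fun_prop))
            ((hw.integrable_of_hasCompactSupport hwc).abs.const_mul ε) fun x => ?_
          by_cases hx : x ∈ tsupport w
          · calc (w x - q.eval (u x)) * w x ≤ |w x - q.eval (u x)| * |w x| := by
                  rw [← abs_mul]; exact le_abs_self _
              _ ≤ ε * |w x| := by gcongr; exact (hq x hx).le
          · simp [image_eq_zero_of_notMem_tsupport hx]
      _ = ε * C := integral_const_mul ε _
  have hsq : ∫ x, w x * w x ∂μ = 0 := by
    refine le_antisymm (le_of_forall_pos_le_add fun ε hε => ?_)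
      (integral_nonneg fun x => mul_self_nonneg (w x))
    have hC : 0 ≤ C := integral_nonneg fun x => abs_nonneg (w x)
    calc ∫ x, w x * w x ∂μ ≤ ε / (C + 1) * C := hbound _ (by positivity)
      _ ≤ 0 + ε := by
          rw [zero_add, div_mul_eq_mul_div, div_le_iff₀ (by positivity)]
          nlinarith
  have hsq_ae := (integral_eq_zero_iff_of_nonneg (fun x => mul_self_nonneg (w x))
    (hint w hw)).mp hsq
  have hsq_eq := (Continuous.ae_eq_iff_eq μ (hw.mul hw) continuous_zero).mp hsq_ae
  exact funext fun x => mul_self_eq_zero.mp (congrFun hsq_eq x)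

theorem eq_zero_of_forall_integral_eval_smul_eq_zero {E : Type*} [NormedAddCommGroup E]
    [NormedSpace ℝ E] [CompleteSpace E] {w : α → E} {u : α → ℝ} (hw : Continuous w)
    (hwc : HasCompactSupport w) (hu : Continuous u) (hinj : InjOn u (tsupport w))
    (horth : ∀ q : ℝ[X], ∫ x, q.eval (u x) • w x ∂μ = 0) : w = 0 := by
  funext x
  refine SeparatingDual.eq_zero_of_forall_dual_eq_zero (R := ℝ) fun φ => ?_
  have hφ : (fun x => φ (w x)) = 0 := by
    refine eq_zero_of_forall_integral_eval_mul_eq_zero (μ := μ) (φ.continuous.comp hw)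
      (hwc.comp_left φ.map_zero) hu (hinj.mono (tsupport_comp_subset φ.map_zero w)) fun q => ?_
    have hint : Integrable (fun x => q.eval (u x) • w x) μ :=
      (by fun_prop : Continuous _).integrable_of_hasCompactSupport hwc.smul_left
    simpa only [map_smul, smul_eq_mul, horth q, map_zero] using φ.integral_comp_comm hint
  exact congrFun hφ x

end Density

theorem sq_add_sq_ne_zero_of_right (r : ℝ) {x : ℝ} (hx : x ≠ 0) : r ^ 2 + x ^ 2 ≠ 0 := by
  positivity

theorem continuous_inv_sq_add_sq {h : ℝ} (hh : h ≠ 0) :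
    Continuous fun r : ℝ => (r ^ 2 + h ^ 2)⁻¹ :=
  (by fun_prop : Continuous fun r : ℝ => r ^ 2 + h ^ 2).inv₀
    fun r => sq_add_sq_ne_zero_of_right r hh

theorem injOn_inv_sq_add_sq (h : ℝ) : InjOn (fun r : ℝ => (r ^ 2 + h ^ 2)⁻¹) (Ici 0) :=
  fun r hr s hs hrs => by
    simpa [pow_left_inj₀ (mem_Ici.mp hr) (mem_Ici.mp hs) two_ne_zero] using hrs

theorem hasDerivAt_inv_sq_add_sq_pow (r : ℝ) (n : ℕ) {x : ℝ} (hx : r ^ 2 + x ^ 2 ≠ 0) :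
    HasDerivAt (fun x => ((r ^ 2 + x ^ 2) ^ n)⁻¹)
      (-(2 * n * x) * ((r ^ 2 + x ^ 2) ^ (n + 1))⁻¹) x := by
  have hs : HasDerivAt (fun x => r ^ 2 + x ^ 2) (2 * x) x := by
    simpa using (hasDerivAt_pow 2 x).const_add (r ^ 2)
  refine ((hs.fun_pow n).fun_inv (pow_ne_zero n hx)).congr_deriv ?_
  rcases n with _ | n
  · simp
  · rw [Nat.add_sub_cancel]
    field_simp
    ring

theorem abs_deriv_inv_sq_add_sq_pow_le (r : ℝ) (n : ℕ) {h x : ℝ}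
    (hx : x ∈ Metric.ball h (|h| / 2)) :
    |-(2 * n * x) * ((r ^ 2 + x ^ 2) ^ (n + 1))⁻¹| ≤ 4 * n * |h| / (h ^ 2 / 4) ^ (n + 1) := by
  rw [Metric.mem_ball, Real.dist_eq] at hx
  have hlow : |h| / 2 < |x| := by
    have := abs_sub_abs_le_abs_sub h x
    rw [abs_sub_comm] at this
    linarith
  have hup : |x| ≤ 2 * |h| := by
    have := abs_sub_abs_le_abs_sub x h
    linarith
  have hh : h ≠ 0 := abs_pos.mp (by linarith [abs_nonneg x])
  have hden : (h ^ 2 / 4) ^ (n + 1) ≤ (r ^ 2 + x ^ 2) ^ (n + 1) := by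
    have : (|h| / 2) ^ 2 ≤ |x| ^ 2 := by gcongr
    gcongr
    nlinarith [sq_nonneg r, sq_abs h, sq_abs x]
  have hden_pos : 0 < (h ^ 2 / 4) ^ (n + 1) := by positivity
  rw [abs_mul, abs_neg, abs_inv, abs_of_pos (hden_pos.trans_le hden),
    ← div_eq_mul_inv, abs_mul, abs_mul, abs_two, Nat.abs_cast]
  calc 2 * n * |x| / (r ^ 2 + x ^ 2) ^ (n + 1) ≤ 4 * n * |h| / (r ^ 2 + x ^ 2) ^ (n + 1) :=
        div_le_div_of_nonneg_right (by nlinarith [n.cast_nonneg (α := ℝ)])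
          (hden_pos.trans_le hden).le
    _ ≤ 4 * n * |h| / (h ^ 2 / 4) ^ (n + 1) := by gcongr

section WeightedIntegral

variable {E : Type*} [NormedAddCommGroup E] [NormedSpace ℝ E]

noncomputable def weightedIntegral (g : ℝ → E) (n : ℕ) (h : ℝ) : E :=
  ∫ r, ((r ^ 2 + h ^ 2) ^ n)⁻¹ • g r

theorem integrable_inv_sq_add_sq_pow_smul {g : ℝ → E} (hg : Integrable g) (n : ℕ) {h : ℝ}
    (hh : h ≠ 0) : Integrable (fun r => ((r ^ 2 + h ^ 2) ^ n)⁻¹ • g r) := by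
  refine hg.bdd_smul ((h ^ 2) ^ n)⁻¹ (by fun_prop) (Filter.Eventually.of_forall fun r => ?_)
  rw [Real.norm_of_nonneg (by positivity)]
  gcongr
  nlinarith [sq_nonneg r]

theorem hasDerivAt_weightedIntegral {g : ℝ → E} (hg : Integrable g) (n : ℕ) {h : ℝ}
    (hh : h ≠ 0) :
    HasDerivAt (weightedIntegral g n) (-(2 * n * h) • weightedIntegral g (n + 1) h) h := by
  have hball : ∀ x ∈ Metric.ball h (|h| / 2), x ≠ 0 := by
    rintro x hx rfl
    rw [Metric.mem_ball, dist_zero_left, Real.norm_eq_abs] at hx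
    linarith [abs_pos.mpr hh]
  have key := hasDerivAt_integral_of_dominated_loc_of_deriv_le (μ := volume) (x₀ := h)
    (F := fun x r => ((r ^ 2 + x ^ 2) ^ n)⁻¹ • g r)
    (F' := fun x r => (-(2 * n * x) * ((r ^ 2 + x ^ 2) ^ (n + 1))⁻¹) • g r)
    (bound := fun r => 4 * n * |h| / (h ^ 2 / 4) ^ (n + 1) * ‖g r‖)
    (Metric.ball_mem_nhds h (by positivity))
    (Filter.Eventually.of_forall fun x =>
      (by fun_prop : Measurable _).aestronglyMeasurable.smul hg.aestronglyMeasurable)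
    (integrable_inv_sq_add_sq_pow_smul hg n hh)
    ((by fun_prop : Measurable _).aestronglyMeasurable.smul hg.aestronglyMeasurable)
    (Filter.Eventually.of_forall fun r x hx => by
      rw [norm_smul, Real.norm_eq_abs]
      exact mul_le_mul_of_nonneg_right (abs_deriv_inv_sq_add_sq_pow_le r n hx) (norm_nonneg _))
    (hg.norm.const_mul _)
    (Filter.Eventually.of_forall fun r x hx =>
      (hasDerivAt_inv_sq_add_sq_pow r n (sq_add_sq_ne_zero_of_right r (hball x hx))).smul_const
        (g r))
  have hderiv := key.2
  simp only [← smul_smul, integral_smul] at hderiv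
  exact hderiv

theorem weightedIntegral_eqOn_zero {g : ℝ → E} (hg : Integrable g) {U : Set ℝ} (hU : IsOpen U)
    (hU0 : (0 : ℝ) ∉ U) {k : ℕ} (hk0 : k ≠ 0) (hk : EqOn (weightedIntegral g k) 0 U) {n : ℕ}
    (hkn : k ≤ n) : EqOn (weightedIntegral g n) 0 U := by
  induction n, hkn using Nat.le_induction with
  | base => exact hk
  | succ n hkn ih =>
    intro h hh
    have hh0 : h ≠ 0 := ne_of_mem_of_not_mem hh hU0
    have hderiv_zero : HasDerivAt (weightedIntegral g n) 0 h :=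
      (hasDerivAt_const h (0 : E)).congr_of_eventuallyEq
        (Filter.eventuallyEq_of_mem (hU.mem_nhds hh) ih)
    have hn : (n : ℝ) ≠ 0 := Nat.cast_ne_zero.mpr (by omega)
    have hcoef : -(2 * n * h) ≠ 0 :=
      neg_ne_zero.mpr (mul_ne_zero (mul_ne_zero two_ne_zero hn) hh0)
    exact (smul_eq_zero.mp ((hasDerivAt_weightedIntegral hg n hh0).unique hderiv_zero)).resolve_left
      hcoef

theorem integral_eval_smul_eq_zero_of_weightedIntegral_eq_zero {g : ℝ → E} (hg : Continuous g)
    (hgc : HasCompactSupport g) {h : ℝ} (hh : h ≠ 0)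
    (hvan : ∀ n, 2 ≤ n → weightedIntegral g n h = 0) (q : ℝ[X]) :
    ∫ r, q.eval (r ^ 2 + h ^ 2)⁻¹ • ((r ^ 2 + h ^ 2)⁻¹ ^ 2 • g r) = 0 := by
  have hu := continuous_inv_sq_add_sq hh
  induction q using Polynomial.induction_on' with
  | add p q hp hq =>
    have hint : ∀ p : ℝ[X],
        Integrable fun r => p.eval (r ^ 2 + h ^ 2)⁻¹ • ((r ^ 2 + h ^ 2)⁻¹ ^ 2 • g r) := fun p =>
      (by fun_prop : Continuous _).integrable_of_hasCompactSupport hgc.smul_left.smul_left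
    simp only [eval_add, add_smul]
    rw [integral_add (hint p) (hint q), hp, hq, add_zero]
  | monomial n c =>
    have hmono : ∀ r : ℝ, (monomial n c).eval (r ^ 2 + h ^ 2)⁻¹ • ((r ^ 2 + h ^ 2)⁻¹ ^ 2 • g r)
        = c • (((r ^ 2 + h ^ 2) ^ (n + 2))⁻¹ • g r) := fun r => by
      rw [eval_monomial, smul_smul, smul_smul, pow_add, mul_inv, inv_pow, inv_pow, mul_assoc]
    simp_rw [hmono]
    rw [integral_smul, ← weightedIntegral, hvan (n + 2) (by omega), smul_zero]

theorem eq_zero_of_weightedIntegral_two_eqOn_zero [CompleteSpace E] {g : ℝ → E}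
    (hg : Continuous g) (hgc : HasCompactSupport g) (hg0 : tsupport g ⊆ Ici 0) {U : Set ℝ}
    (hU : IsOpen U) (hU0 : (0 : ℝ) ∉ U) (hUne : U.Nonempty)
    (h2 : EqOn (weightedIntegral g 2) 0 U) : g = 0 := by
  obtain ⟨h, hh⟩ := hUne
  have hh0 : h ≠ 0 := ne_of_mem_of_not_mem hh hU0
  have hvan : ∀ n, 2 ≤ n → weightedIntegral g n h = 0 := fun n hn =>
    weightedIntegral_eqOn_zero (hg.integrable_of_hasCompactSupport hgc) hU hU0 two_ne_zero h2 hn hh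
  have hu := continuous_inv_sq_add_sq hh0
  have hw : (fun r : ℝ => (r ^ 2 + h ^ 2)⁻¹ ^ 2 • g r) = 0 :=
    eq_zero_of_forall_integral_eval_smul_eq_zero (μ := volume) (by fun_prop) hgc.smul_left hu
      ((injOn_inv_sq_add_sq h).mono ((tsupport_smul_subset_right _ g).trans hg0))
      (integral_eval_smul_eq_zero_of_weightedIntegral_eq_zero hg hgc hh0 hvan)
  funext r
  simpa [sq_add_sq_ne_zero_of_right r hh0] using congrFun hw r

end WeightedIntegral

theorem vanishing_weighted_integrals_on_interval_general
    (a b : ℝ) (ha : 0 < a)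
    (g : ℝ → ℂ) (hg : Continuous g) (hsupp : ∀ r ∉ Set.Icc a b, g r = 0)
    (c d : ℝ) (hcd : c < d)
    (hm : ∀ h ∈ Set.Ioo c d, (∫ r in a..b, g r / ((r ^ 2 + h ^ 2 : ℝ) : ℂ) ^ 2) = 0) :
    ∀ r : ℝ, g r = 0 := by
  have htsupp : tsupport g ⊆ Icc a b :=
    closure_minimal (Function.support_subset_iff'.mpr hsupp) isClosed_Icc
  have h2 : EqOn (weightedIntegral g 2) 0 (Ioo c d \ {0}) := fun h hh => by
    rw [Pi.zero_apply, ← hm h hh.1, intervalIntegral_eq_integral_of_forall_notMem_Icc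
      fun r hr => by rw [hsupp r hr, zero_div]]
    simp [weightedIntegral, Complex.real_smul, div_eq_inv_mul]
  refine congrFun (eq_zero_of_weightedIntegral_two_eqOn_zero hg
    (HasCompactSupport.intro isCompact_Icc hsupp) (htsupp.trans ?_)
    (isOpen_Ioo.sdiff isClosed_singleton) (by simp)
    ((Ioo_infinite hcd).sdiff (finite_singleton 0)).nonempty h2)
  exact Icc_subset_Ici_self.trans (Ici_subset_Ici.mpr ha.le)

/-- **Vanishing of the weighted integrals on an interval of parameters forces vanishing.**
If `g : ℝ → ℂ` is continuous with support in `[a,b] ⊂ (0,∞)` and there is a nonempty open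
interval `(c,d) ⊂ (0,∞)` such that `∫_a^b g(r) (r² + h²)^{−2} dr = 0` for every
`h ∈ (c,d)`, then `g = 0` identically. -/
theorem vanishing_weighted_integrals_on_interval
    (a b : ℝ) (ha : 0 < a) (hab : a ≤ b)
    (g : ℝ → ℂ) (hg : Continuous g) (hsupp : ∀ r ∉ Set.Icc a b, g r = 0)
    (c d : ℝ) (hc : 0 ≤ c) (hcd : c < d)
    (hm : ∀ h ∈ Set.Ioo c d, (∫ r in a..b, g r / ((r ^ 2 + h ^ 2 : ℝ) : ℂ) ^ 2) = 0) :
    ∀ r : ℝ, g r = 0 :=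
  vanishing_weighted_integrals_on_interval_general a b ha g hg hsupp c d hcd hm
end

section
/- Let c ∈ ℂ with c ∉ (−∞, 0] (i.e. c is not a nonpositive real number). Then the function t ↦ (t² + c)^{−1} is integrable on ℝ and ∫_ℝ (t² + c)^{−1} dt = π/√c, where √c denotes the principal branch of the square root (the one with positive real part). -/
/-!
Write `c = a ^ 2` with `a = c ^ (1/2)`, so that `0 < re a`, and put `w = I * a`, a point of the
upper half-plane. Then `t ↦ log (w + t) - log (w - t)` is an antiderivative of
`-2 I a / (t ^ 2 + a ^ 2)` on `ℝ`, and it tends to `∓ π I` at `±∞`: for large `t` the point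
`w + t` approaches the positive axis, while `w - t` approaches the negative axis from above, where
`arg` is close to `π`. Integrability comes from the identity
`re (conj a * (t ^ 2 + a ^ 2)) = re a * (t ^ 2 + ‖a‖ ^ 2)`.
-/

open MeasureTheory Complex ComplexConjugate Filter Topology

lemma re_cpow_one_half_pos {c : ℂ} (hc : c ∈ slitPlane) : 0 < (c ^ (1 / 2 : ℂ)).re := by
  rw [one_div, cpow_inv_two_re, Real.sqrt_pos]
  rcases mem_slitPlane_iff.mp hc with hre | him
  · linarith [norm_nonneg c]
  · linarith [neg_abs_le c.re, abs_re_lt_norm.mpr him]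

lemma log_eq_log_neg_add_pi_mul_I {z : ℂ} (hz : 0 < z.im) :
    log z = log (-z) + Real.pi * I := by
  apply Complex.ext
  · simp [log_re]
  · simp [log_im, arg_neg_eq_arg_sub_pi_of_im_pos hz]

lemma tendsto_log_ofReal_add_sub_log_atTop (w : ℂ) :
    Tendsto (fun t : ℝ => log (t + w) - log t) atTop (𝓝 0) := by
  have hinv : Tendsto (fun t : ℝ => (t : ℂ)⁻¹) atTop (𝓝 0) := by
    simpa [Function.comp_def] using (continuous_ofReal.tendsto 0).comp tendsto_inv_atTop_zero
  have hsmall : Tendsto (fun t : ℝ => 1 + w / t) atTop (𝓝 1) := by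
    simpa [div_eq_mul_inv] using tendsto_const_nhds.add (hinv.const_mul w)
  have hlog : Tendsto (fun t : ℝ => log (1 + w / t)) atTop (𝓝 0) := by
    simpa [Function.comp_def] using (continuousAt_clog one_mem_slitPlane).tendsto.comp hsmall
  refine hlog.congr' ?_
  filter_upwards [eventually_gt_atTop 0, hsmall.eventually_ne one_ne_zero] with t ht hne
  have hsplit : (t : ℂ) + w = t * (1 + w / t) := by
    field_simp [ofReal_ne_zero.mpr ht.ne']
  rw [hsplit, log_ofReal_mul ht hne, ofReal_log ht.le]
  ring

lemma tendsto_log_add_sub_log_sub_atTop {w : ℂ} (hw : 0 < w.im) :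
    Tendsto (fun t : ℝ => log (w + t) - log (w - t)) atTop (𝓝 (-(Real.pi * I))) := by
  have h := (tendsto_log_ofReal_add_sub_log_atTop w).sub
    ((tendsto_log_ofReal_add_sub_log_atTop (-w)).add_const (Real.pi * I))
  rw [zero_sub, zero_add] at h
  refine h.congr fun t => ?_
  rw [log_eq_log_neg_add_pi_mul_I (z := w - t) (by simpa using hw)]
  ring_nf

lemma tendsto_log_add_sub_log_sub_atBot {w : ℂ} (hw : 0 < w.im) :
    Tendsto (fun t : ℝ => log (w + t) - log (w - t)) atBot (𝓝 (Real.pi * I)) := by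
  have h := (tendsto_log_add_sub_log_sub_atTop hw).neg.comp tendsto_neg_atBot_atTop
  rw [neg_neg] at h
  refine h.congr fun t => ?_
  simp only [Function.comp_apply, ofReal_neg]
  ring_nf

lemma hasDerivAt_log_add_sub_log_sub {w : ℂ} (hw : 0 < w.im) (t : ℝ) :
    HasDerivAt (fun t : ℝ => log (w + t) - log (w - t)) ((w + t)⁻¹ + (w - t)⁻¹) t := by
  have hid : HasDerivAt (fun s : ℝ => (s : ℂ)) 1 t := by
    simpa using (hasDerivAt_id t).ofReal_comp
  have hplus := (hid.const_add w).clog_real (mem_slitPlane_iff.mpr (.inr (by simpa using hw.ne')))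
  have hminus := (hid.const_sub w).clog_real (mem_slitPlane_iff.mpr (.inr (by simpa using hw.ne')))
  exact (hplus.sub hminus).congr_deriv (by ring)

lemma re_mul_sq_add_norm_sq_le (a : ℂ) (t : ℝ) :
    a.re * (t ^ 2 + ‖a‖ ^ 2) ≤ ‖a‖ * ‖(t : ℂ) ^ 2 + a ^ 2‖ := by
  have hexpand : (conj a * ((t : ℂ) ^ 2 + a ^ 2)).re = a.re * (t ^ 2 + ‖a‖ ^ 2) := by
    rw [show conj a * ((t : ℂ) ^ 2 + a ^ 2) = conj a * (t : ℂ) ^ 2 + a * (a * conj a) by ring,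
      mul_conj, normSq_eq_norm_sq, ← ofReal_pow]
    simp only [add_re, mul_re, conj_re, conj_im, ofReal_re, ofReal_im]
    ring
  calc a.re * (t ^ 2 + ‖a‖ ^ 2) = (conj a * ((t : ℂ) ^ 2 + a ^ 2)).re := hexpand.symm
    _ ≤ ‖conj a * ((t : ℂ) ^ 2 + a ^ 2)‖ := re_le_norm _
    _ = ‖a‖ * ‖(t : ℂ) ^ 2 + a ^ 2‖ := by rw [norm_mul, norm_conj]

lemma integrable_inv_ofReal_sq_add_sq {a : ℂ} (ha : 0 < a.re) :
    Integrable (fun t : ℝ => ((t : ℂ) ^ 2 + a ^ 2)⁻¹) := by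
  have hna : 0 < ‖a‖ := ha.trans_le (re_le_norm a)
  refine ((integrable_inv_one_add_sq.comp_div hna.ne').const_mul (a.re * ‖a‖)⁻¹).mono'
    (by fun_prop) (.of_forall fun t => ?_)
  have hpos : 0 < a.re * (t ^ 2 + ‖a‖ ^ 2) := by positivity
  rw [norm_inv]
  calc ‖(t : ℂ) ^ 2 + a ^ 2‖⁻¹ ≤ (a.re * (t ^ 2 + ‖a‖ ^ 2) / ‖a‖)⁻¹ :=
        inv_anti₀ (by positivity) (div_le_of_le_mul₀ hna.le (norm_nonneg _)
          (by linarith [re_mul_sq_add_norm_sq_le a t]))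
    _ = (a.re * ‖a‖)⁻¹ * (1 + (t / ‖a‖) ^ 2)⁻¹ := by
        field_simp
        ring

lemma integral_inv_ofReal_sq_add_sq {a : ℂ} (ha : 0 < a.re) :
    ∫ t : ℝ, ((t : ℂ) ^ 2 + a ^ 2)⁻¹ = Real.pi / a := by
  have hw : 0 < (I * a).im := by simpa using ha
  have hderiv (t : ℝ) : HasDerivAt (fun t : ℝ => log (I * a + t) - log (I * a - t))
      (-(2 * I * a) * ((t : ℂ) ^ 2 + a ^ 2)⁻¹) t := by
    have hplus : I * a + t ≠ 0 := fun h => hw.ne' (by simpa using congrArg im h)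
    have hminus : I * a - t ≠ 0 := fun h => hw.ne' (by simpa using congrArg im h)
    have hfactor : (t : ℂ) ^ 2 + a ^ 2 = -((I * a + t) * (I * a - t)) := by
      linear_combination a ^ 2 * I_sq
    refine (hasDerivAt_log_add_sub_log_sub hw t).congr_deriv ?_
    rw [hfactor]
    field_simp
    ring
  have h := integral_of_hasDerivAt_of_tendsto hderiv
    ((integrable_inv_ofReal_sq_add_sq ha).const_mul _)
    (tendsto_log_add_sub_log_sub_atBot hw) (tendsto_log_add_sub_log_sub_atTop hw)
  have ha0 : a ≠ 0 := fun h => by simp [h] at ha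
  rw [integral_const_mul] at h
  rw [eq_div_iff ha0]
  linear_combination (I / 2) * h + (a * (∫ t : ℝ, ((t : ℂ) ^ 2 + a ^ 2)⁻¹) - Real.pi) * I_sq

/-- **Evaluation of `∫_ℝ (t² + c)^{−1} dt` for complex `c` off the negative real axis.**
If `c ∈ ℂ` is not a nonpositive real number, then `t ↦ (t² + c)^{−1}` is integrable on `ℝ`
and `∫_ℝ (t² + c)^{−1} dt = π / √c`, where `√c = c^{1/2}` is the principal square root
(the one with positive real part). -/
theorem integral_inv_sq_add_const
    (c : ℂ) (hc : ∀ x : ℝ, x ≤ 0 → c ≠ (x : ℂ)) :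
    Integrable (fun t : ℝ => ((t : ℂ) ^ 2 + c)⁻¹) ∧
      (∫ t : ℝ, ((t : ℂ) ^ 2 + c)⁻¹) = (Real.pi : ℂ) / c ^ ((1 : ℂ) / 2) := by
  have hslit : c ∈ slitPlane := mem_slitPlane_iff_not_le_zero.mpr fun hle =>
    hc c.re (le_def.mp hle).1 (ext rfl (le_def.mp hle).2)
  have hsq : (c ^ (1 / 2 : ℂ)) ^ 2 = c := by
    rw [one_div]
    exact cpow_ofNat_inv_pow c 2
  have hre := re_cpow_one_half_pos hslit
  have key := And.intro (integrable_inv_ofReal_sq_add_sq hre) (integral_inv_ofReal_sq_add_sq hre)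
  rwa [hsq] at key
end

section
/- Let b > 0. Then lim_{ε→0⁺} ∫_ℝ (t² − b² − iε)^{−1} dt = iπ/b; that is, for every ε > 0 the function t ↦ (t² − b² − iε)^{−1} is integrable on ℝ and the value of the integral converges to iπ/b as ε tends to 0 from above. -/
/-!
For `Im w > 0`, partial fractions give `(t² - w²)⁻¹ = (2w)⁻¹ ((t - w)⁻¹ - (t + w)⁻¹)`, with
antiderivative `(2w)⁻¹ (log (t - w) - log (t + w))` on the real line. This tends to `0` at `+∞`
and to `-πi/w` at `-∞`, because there `t - w` and `t + w` approach the negative real axis from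
below and from above, so `∫ (t² - w²)⁻¹ dt = πi/w`. Applied to `w = √(b² + iε)`, which lies in
the upper half plane and tends to `b` as `ε → 0⁺`, this gives the limit `iπ/b`.
-/

open MeasureTheory Filter
open Complex Asymptotics Topology
open scoped Real

namespace Complex

lemma ofReal_sq_sub_sq_ne_zero {w : ℂ} (hw : w.im ≠ 0) (t : ℝ) : (t : ℂ) ^ 2 - w ^ 2 ≠ 0 := by
  rw [sub_ne_zero]
  intro h
  rcases sq_eq_sq_iff_eq_or_eq_neg.1 h with h | h <;> exact hw (by simpa using congrArg im h.symm)

lemma isEquivalent_ofReal_sq_sub_sq (w : ℂ) :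
    (fun t : ℝ => (t : ℂ) ^ 2 - w ^ 2) ~[cocompact ℝ] fun t => ((1 + t ^ 2 : ℝ) : ℂ) := by
  have hconst : (fun _ : ℝ => -(w ^ 2 + 1)) =o[cocompact ℝ] fun t => ((1 + t ^ 2 : ℝ) : ℂ) := by
    refine isLittleO_const_left.2 <| .inr <|
      tendsto_atTop_mono (fun t => ?_) tendsto_norm_cocompact_atTop
    simp only [Function.comp_apply, norm_real, Real.norm_eq_abs]
    rw [abs_of_pos (by positivity : (0 : ℝ) < 1 + t ^ 2)]
    nlinarith [sq_abs t, sq_nonneg (|t| - 1)]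
  refine hconst.congr_left fun t => ?_
  simp only [Pi.sub_apply]
  push_cast
  ring

lemma integrable_inv_ofReal_sq_sub_sq {w : ℂ} (hw : w.im ≠ 0) :
    Integrable (fun t : ℝ => ((t : ℂ) ^ 2 - w ^ 2)⁻¹) := by
  have hcont : Continuous (fun t : ℝ => ((t : ℂ) ^ 2 - w ^ 2)⁻¹) :=
    (by fun_prop : Continuous fun t : ℝ => (t : ℂ) ^ 2 - w ^ 2).inv₀ (ofReal_sq_sub_sq_ne_zero hw)
  refine hcont.locallyIntegrable.integrable_of_isBigO_cocompact
    (isEquivalent_ofReal_sq_sub_sq w).inv.isBigO (Integrable.integrableAtFilter ?_ _)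
  refine (integrable_inv_one_add_sq.ofReal (𝕜 := ℂ)).congr (.of_forall fun t => ?_)
  simp

lemma hasDerivAt_log_sub_log_add {w : ℂ} (hw : w.im ≠ 0) (t : ℝ) :
    HasDerivAt (fun t : ℝ => (2 * w)⁻¹ * (log (t - w) - log (t + w)))
      ((t : ℂ) ^ 2 - w ^ 2)⁻¹ t := by
  have hlog_sub :=
    ((hasDerivAt_id t).ofReal_comp.sub_const w).clog_real (Or.inr (by simpa using hw))
  have hlog_add :=
    ((hasDerivAt_id t).ofReal_comp.add_const w).clog_real (Or.inr (by simpa using hw))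
  refine ((hlog_sub.sub hlog_add).const_mul (2 * w)⁻¹).congr_deriv ?_
  have hsub : (t : ℂ) - w ≠ 0 := fun h => hw (by simpa using congrArg im h.symm)
  have hadd : (t : ℂ) + w ≠ 0 := fun h => hw (by simpa using congrArg im h)
  have hw0 : w ≠ 0 := by rintro rfl; simp at hw
  have hden := ofReal_sq_sub_sq_ne_zero hw t
  simp only [id, ofReal_one]
  field_simp
  ring

lemma tendsto_const_add_div_ofReal_atTop (z c : ℂ) :
    Tendsto (fun t : ℝ => z + c / t) atTop (𝓝 z) := by
  simpa [div_eq_mul_inv] using (tendsto_inv_atTop_zero.ofReal.const_mul c).const_add z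

lemma tendsto_log_mul_ofReal_add_sub_log {z c a : ℂ} (hz : z ≠ 0)
    (h : Tendsto (fun t : ℝ => log (z + c / t)) atTop (𝓝 a)) :
    Tendsto (fun t : ℝ => log (z * t + c) - log t) atTop (𝓝 a) := by
  have hne : ∀ᶠ t : ℝ in atTop, z + c / t ≠ 0 :=
    (tendsto_const_add_div_ofReal_atTop z c).eventually_ne hz
  refine h.congr' ?_
  filter_upwards [hne, eventually_gt_atTop 0] with t hne ht
  have ht0 : (t : ℂ) ≠ 0 := by exact_mod_cast ht.ne'
  rw [show z * t + c = t * (z + c / t) by field_simp, log_ofReal_mul ht hne, ofReal_log ht.le]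
  ring

lemma tendsto_log_ofReal_add_sub_log_atTop (c : ℂ) :
    Tendsto (fun t : ℝ => log (t + c) - log t) atTop (𝓝 0) := by
  have h := (continuousAt_clog one_mem_slitPlane).tendsto.comp
    (tendsto_const_add_div_ofReal_atTop _ c)
  simpa using tendsto_log_mul_ofReal_add_sub_log one_ne_zero (by simpa [Function.comp_def] using h)

lemma tendsto_log_neg_ofReal_add_sub_log_atTop_of_im_pos {c : ℂ} (hc : 0 < c.im) :
    Tendsto (fun t : ℝ => log (-t + c) - log t) atTop (𝓝 (π * I)) := by
  have h : Tendsto (fun t : ℝ => -1 + c / t) atTop (𝓝[{z : ℂ | 0 ≤ z.im}] (-1)) := by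
    refine tendsto_nhdsWithin_iff.2 ⟨tendsto_const_add_div_ofReal_atTop _ c, ?_⟩
    filter_upwards [eventually_gt_atTop 0] with t ht
    simpa [div_ofReal_im] using (div_pos hc ht).le
  have hlog := (tendsto_log_nhdsWithin_im_nonneg_of_re_neg_of_im_zero (z := -1) (by simp)
    (by simp)).comp h
  simpa using tendsto_log_mul_ofReal_add_sub_log (neg_ne_zero.2 one_ne_zero)
    (by simpa [Function.comp_def] using hlog)

lemma tendsto_log_neg_ofReal_add_sub_log_atTop_of_im_neg {c : ℂ} (hc : c.im < 0) :
    Tendsto (fun t : ℝ => log (-t + c) - log t) atTop (𝓝 (-(π * I))) := by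
  have h : Tendsto (fun t : ℝ => -1 + c / t) atTop (𝓝[{z : ℂ | z.im < 0}] (-1)) := by
    refine tendsto_nhdsWithin_iff.2 ⟨tendsto_const_add_div_ofReal_atTop _ c, ?_⟩
    filter_upwards [eventually_gt_atTop 0] with t ht
    simpa [div_ofReal_im] using div_neg_of_neg_of_pos hc ht
  have hlog := (tendsto_log_nhdsWithin_im_neg_of_re_neg_of_im_zero (z := -1) (by simp)
    (by simp)).comp h
  simpa using tendsto_log_mul_ofReal_add_sub_log (neg_ne_zero.2 one_ne_zero)
    (by simpa [Function.comp_def] using hlog)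

lemma tendsto_log_sub_log_add_atTop (w : ℂ) :
    Tendsto (fun t : ℝ => log (t - w) - log (t + w)) atTop (𝓝 0) := by
  simpa [← sub_eq_add_neg] using
    (tendsto_log_ofReal_add_sub_log_atTop (-w)).sub (tendsto_log_ofReal_add_sub_log_atTop w)

lemma tendsto_log_sub_log_add_atBot {w : ℂ} (hw : 0 < w.im) :
    Tendsto (fun t : ℝ => log (t - w) - log (t + w)) atBot (𝓝 (-(2 * π * I))) := by
  have h := ((tendsto_log_neg_ofReal_add_sub_log_atTop_of_im_neg (c := -w) (by simpa using hw)).sub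
    (tendsto_log_neg_ofReal_add_sub_log_atTop_of_im_pos hw)).comp tendsto_neg_atBot_atTop
  -- `t + w` approaches the negative real axis from above and `t - w` from below
  convert h using 2 with t
  · simp [← sub_eq_add_neg]
  · ring

theorem integral_inv_ofReal_sq_sub_sq {w : ℂ} (hw : 0 < w.im) :
    ∫ t : ℝ, ((t : ℂ) ^ 2 - w ^ 2)⁻¹ = π * I / w := by
  rw [integral_of_hasDerivAt_of_tendsto (hasDerivAt_log_sub_log_add hw.ne')
    (integrable_inv_ofReal_sq_sub_sq hw.ne') ((tendsto_log_sub_log_add_atBot hw).const_mul _)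
    ((tendsto_log_sub_log_add_atTop w).const_mul _)]
  have hw0 : w ≠ 0 := by rintro rfl; simp at hw
  field_simp
  ring

lemma sq_sqrt (z : ℂ) : z.sqrt ^ 2 = z := by
  simp [sqrt]

lemma im_sqrt_pos {z : ℂ} (hz : 0 < z.im) : 0 < z.sqrt.im := by
  rw [sqrt, cpow_inv_two_im_eq_sqrt hz.le, Real.sqrt_pos]
  linarith [abs_re_lt_norm.2 hz.ne', le_abs_self z.re]

lemma sqrt_ofReal_sq {b : ℝ} (hb : 0 ≤ b) : ((b : ℂ) ^ 2).sqrt = b := by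
  rw [sqrt_of_nonneg (by norm_cast; positivity)]
  norm_cast
  simp [Real.sqrt_sq hb]

end Complex

/-- **Limiting absorption evaluation of `∫_ℝ (t² − b² − iε)^{−1} dt`.** For `b > 0`, the
function `t ↦ (t² − b² − iε)^{−1}` is integrable on `ℝ` for every `ε > 0`, and the value
of the integral converges to `iπ/b` as `ε → 0⁺`. -/
theorem integral_inv_limiting_absorption
    (b : ℝ) (hb : 0 < b) :
    (∀ ε : ℝ, 0 < ε →
        Integrable (fun t : ℝ => ((t : ℂ) ^ 2 - (b : ℂ) ^ 2 - Complex.I * (ε : ℂ))⁻¹)) ∧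
      Tendsto (fun ε : ℝ => ∫ t : ℝ, ((t : ℂ) ^ 2 - (b : ℂ) ^ 2 - Complex.I * (ε : ℂ))⁻¹)
        (nhdsWithin 0 (Set.Ioi 0)) (nhds (Complex.I * (Real.pi : ℂ) / (b : ℂ))) := by
  set w : ℝ → ℂ := fun ε => sqrt ((b : ℂ) ^ 2 + I * ε)
  have hw_im (ε : ℝ) (hε : 0 < ε) : 0 < (w ε).im := im_sqrt_pos (by simpa [← ofReal_pow] using hε)
  have hintegrand (ε : ℝ) :
      (fun t : ℝ => ((t : ℂ) ^ 2 - (b : ℂ) ^ 2 - I * ε)⁻¹) =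
        fun t : ℝ => ((t : ℂ) ^ 2 - w ε ^ 2)⁻¹ := by
    simp [w, sq_sqrt, sub_sub]
  have hw_lim : Tendsto w (𝓝[>] 0) (𝓝 b) := by
    have h : ContinuousAt w 0 :=
      (continuousAt_sqrt (Or.inl (by simp [← ofReal_pow]; positivity))).comp (by fun_prop)
    simpa [w, sqrt_ofReal_sq hb.le] using h.tendsto.mono_left nhdsWithin_le_nhds
  refine ⟨fun ε hε => hintegrand ε ▸ integrable_inv_ofReal_sq_sub_sq (hw_im ε hε).ne', ?_⟩
  have hlim : Tendsto (fun ε => π * I / w ε) (𝓝[>] 0) (𝓝 (I * π / b)) := by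
    rw [mul_comm I]
    exact tendsto_const_nhds.div hw_lim (by exact_mod_cast hb.ne')
  refine hlim.congr' (eventually_nhdsWithin_of_forall fun ε hε => ?_)
  simp only [hintegrand, integral_inv_ofReal_sq_sub_sq (hw_im ε hε)]
end

section
/- Let ε ∈ (0,1], A > 0, and let χ : ℝ² × ℝ² → ℂ be measurable and satisfy: (i) ∫_{ℝ²} |χ(x,y)| dy ≤ A for every x ∈ ℝ²; and (ii) |χ(x,y)| ≤ A ε^{−2} (ε/|x−y|)^N for every x ≠ y and every N ∈ {0,1,2,3}. Then there exists a constant C > 0 depending only on A (not on ε, χ, or x) such that for every x ∈ ℝ², ∫_{ℝ²} |χ(x,y)| · | |y|² − 1 |^{−1/2} dy ≤ C ε^{−1/2}; in particular the integral on the left is finite. -/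
/-!
Split `ℝ²` along `||y|² - 1| = ε/4`. Away from the circle the weight `||y|² - 1|^{-1/2}` is at
most `2/√ε`, so (i) alone gives `2A/√ε`. Near it, cut dyadically around `x`: (ii) with `N = 0`
bounds the kernel by `A/ε²` on `|x - y| < ε`, and (ii) with `N = 2` bounds it by `A/(2ⁿε)²` on
`2ⁿε ≤ |x - y| < 2ⁿ⁺¹ε`. Over a square of side `2r` the weight integrates near the circle to
`O(r√ε)`: by Tonelli along a coordinate `t` with `|t| ≥ 1/2`, using `|t² - c| ≥ |t| ||t| - √c|`
and `∫_{|s| < a} |s|^{-1/2} ds = 4√a`. The pieces then add up to a geometric series `O(A/√ε)`.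
-/

open MeasureTheory

noncomputable section

/-- The Euclidean norm on `ℝ²`. -/
def euclNorm (v : ℝ × ℝ) : ℝ := Real.sqrt (v.1 ^ 2 + v.2 ^ 2)

open Set Metric
open scoped ENNReal

theorem lintegral_comp_abs_le_two_mul {μ : Measure ℝ} [μ.IsNegInvariant] {f : ℝ → ℝ≥0∞}
    (hf : Measurable f) : ∫⁻ t, f |t| ∂μ ≤ 2 * ∫⁻ t, f t ∂μ :=
  calc ∫⁻ t, f |t| ∂μ ≤ ∫⁻ t, f t + f (-t) ∂μ := by
        refine lintegral_mono fun t => ?_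
        rcases abs_choice t with h | h <;> rw [h]
        exacts [le_self_add, le_add_self]
    _ = 2 * ∫⁻ t, f t ∂μ := by
        rw [lintegral_add_left hf, lintegral_neg_eq_self, two_mul]

theorem lintegral_le_add_tsum_dyadic {α : Type*} [MeasurableSpace α] {μ : Measure α}
    (s : Set α) (f : α → ℝ≥0∞) (d : α → ℝ) {ε : ℝ} (hε : 0 < ε) :
    ∫⁻ y in s, f y ∂μ ≤ ∫⁻ y in s ∩ {y | d y < ε}, f y ∂μ +
      ∑' k : ℕ, ∫⁻ y in s ∩ {y | 2 ^ k * ε ≤ d y ∧ d y < 2 ^ (k + 1) * ε}, f y ∂μ := by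
  have hcover : s ⊆ (s ∩ {y | d y < ε}) ∪
      ⋃ k : ℕ, s ∩ {y | 2 ^ k * ε ≤ d y ∧ d y < 2 ^ (k + 1) * ε} := by
    intro y hy
    rcases lt_or_ge (d y) ε with h | h
    · exact Or.inl ⟨hy, h⟩
    · obtain ⟨k, hk⟩ := exists_nat_pow_near ((one_le_div hε).2 h) one_lt_two
      rw [le_div_iff₀ hε, div_lt_iff₀ hε] at hk
      exact Or.inr (mem_iUnion.2 ⟨k, hy, hk⟩)
  calc ∫⁻ y in s, f y ∂μ ≤ _ := lintegral_mono_set hcover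
    _ ≤ _ := lintegral_union_le _ _ _
    _ ≤ _ := add_le_add le_rfl (lintegral_iUnion_le _ _)

theorem setLIntegral_compl_div_sqrt_le {α : Type*} [MeasurableSpace α] {μ : Measure α}
    {f g : α → ℝ} (hg : Measurable g) {c : ℝ} (hc : 0 < c) :
    ∫⁻ y in {y | |g y| < c}ᶜ, ENNReal.ofReal (f y / √|g y|) ∂μ ≤
      (∫⁻ y, ENNReal.ofReal (f y) ∂μ) * ENNReal.ofReal (1 / √c) := by
  have hpt : ∀ y ∈ {y | |g y| < c}ᶜ,
      ENNReal.ofReal (f y / √|g y|) ≤ ENNReal.ofReal (f y) * ENNReal.ofReal (1 / √c) := by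
    intro y hy
    rw [← ENNReal.ofReal_mul' (by positivity), mul_one_div]
    rcases le_total 0 (f y) with hf | hf
    · exact ENNReal.ofReal_le_ofReal <| div_le_div_of_nonneg_left hf (by positivity)
        (Real.sqrt_le_sqrt (not_lt.1 hy))
    · rw [ENNReal.ofReal_of_nonpos (div_nonpos_of_nonpos_of_nonneg hf (Real.sqrt_nonneg _))]
      exact zero_le
  calc ∫⁻ y in {y | |g y| < c}ᶜ, ENNReal.ofReal (f y / √|g y|) ∂μ
      ≤ ∫⁻ y in {y | |g y| < c}ᶜ, ENNReal.ofReal (f y) * ENNReal.ofReal (1 / √c) ∂μ :=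
        setLIntegral_mono' (measurableSet_lt hg.abs measurable_const).compl hpt
    _ ≤ (∫⁻ y, ENNReal.ofReal (f y) ∂μ) * ENNReal.ofReal (1 / √c) := by
        rw [← lintegral_mul_const' _ _ ENNReal.ofReal_ne_top]
        exact setLIntegral_le_lintegral _ _

theorem lintegral_Ioo_inv_sqrt {a : ℝ} (ha : 0 ≤ a) :
    ∫⁻ u in Ioo 0 a, ENNReal.ofReal (1 / √u) = ENNReal.ofReal (2 * √a) := by
  have hrpow : EqOn (fun u : ℝ => 1 / √u) (fun u => u ^ (-(1 / 2) : ℝ)) (Ioo 0 a) :=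
    fun u hu => by dsimp only; rw [Real.rpow_neg hu.1.le, Real.sqrt_eq_rpow, one_div]
  have hint : IntegrableOn (fun u : ℝ => u ^ (-(1 / 2) : ℝ)) (Ioo 0 a) := by
    rcases ha.eq_or_lt with rfl | ha
    · simp
    · rw [intervalIntegral.integrableOn_Ioo_rpow_iff ha]; norm_num
  rw [setLIntegral_congr_fun measurableSet_Ioo (fun u hu => congrArg ENNReal.ofReal (hrpow hu)),
    ← ofReal_integral_eq_lintegral_ofReal hint
      ((ae_restrict_iff' measurableSet_Ioo).2 <|
        ae_of_all _ fun u hu => Real.rpow_nonneg hu.1.le _),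
    ← integral_Ioc_eq_integral_Ioo, ← intervalIntegral.integral_of_le ha,
    integral_rpow (Or.inl (by norm_num)), Real.sqrt_eq_rpow]
  congr 1
  norm_num
  ring

theorem lintegral_ball_inv_sqrt_abs_sub_le {m a : ℝ} (ha : 0 ≤ a) :
    ∫⁻ t in ball m a, ENNReal.ofReal (1 / √|t - m|) ≤ ENNReal.ofReal (4 * √a) := by
  have hφ : Measurable fun u : ℝ => ENNReal.ofReal (1 / √u) := by fun_prop
  -- at `t = m` both sides vanish, as `1 / √0 = 0`
  have hball : (ball m a).indicator (fun t => ENNReal.ofReal (1 / √|t - m|)) =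
      fun t => (Ioo 0 a).indicator (fun u => ENNReal.ofReal (1 / √u)) |t - m| := by
    ext t
    by_cases h0 : t - m = 0
    · simp [h0]
    · simp [indicator, Real.dist_eq, abs_pos.2 h0]
  calc ∫⁻ t in ball m a, ENNReal.ofReal (1 / √|t - m|)
      = ∫⁻ t, (Ioo 0 a).indicator (fun u => ENNReal.ofReal (1 / √u)) |t| := by
        rw [← lintegral_indicator measurableSet_ball, hball,
          lintegral_sub_right_eq_self (fun t => (Ioo 0 a).indicator _ |t|)]
    _ ≤ 2 * ∫⁻ t, (Ioo 0 a).indicator (fun u => ENNReal.ofReal (1 / √u)) t :=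
        lintegral_comp_abs_le_two_mul (hφ.indicator measurableSet_Ioo)
    _ = ENNReal.ofReal (4 * √a) := by
        rw [lintegral_indicator measurableSet_Ioo, lintegral_Ioo_inv_sqrt ha,
          ← ENNReal.ofReal_ofNat 2, ← ENNReal.ofReal_mul zero_le_two]
        ring_nf

theorem lintegral_inv_sqrt_abs_abs_sub_le {m a : ℝ} (ha : 0 ≤ a) :
    ∫⁻ t in {t | |(|t| - m)| < a}, ENNReal.ofReal (1 / √|(|t| - m)|) ≤
      ENNReal.ofReal (8 * √a) := by
  have hmeas : Measurable fun t : ℝ => ENNReal.ofReal (1 / √|t - m|) := by fun_prop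
  calc ∫⁻ t in {t | |(|t| - m)| < a}, ENNReal.ofReal (1 / √|(|t| - m)|)
      = ∫⁻ t, (ball m a).indicator (fun t => ENNReal.ofReal (1 / √|t - m|)) |t| := by
        rw [← lintegral_indicator (measurableSet_lt (by fun_prop) measurable_const)]
        rfl
    _ ≤ 2 * ∫⁻ t in ball m a, ENNReal.ofReal (1 / √|t - m|) := by
        rw [← lintegral_indicator measurableSet_ball]
        exact lintegral_comp_abs_le_two_mul (hmeas.indicator measurableSet_ball)
    _ ≤ 2 * ENNReal.ofReal (4 * √a) := by gcongr; exact lintegral_ball_inv_sqrt_abs_sub_le ha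
    _ = ENNReal.ofReal (8 * √a) := by
        rw [← ENNReal.ofReal_ofNat 2, ← ENNReal.ofReal_mul zero_le_two]
        ring_nf

theorem abs_mul_abs_abs_sub_sqrt_le (t c : ℝ) : |t| * |(|t| - √c)| ≤ |t ^ 2 - c| := by
  rcases le_or_gt c 0 with hc | hc
  · rw [Real.sqrt_eq_zero'.2 hc, sub_zero, abs_abs, ← sq, sq_abs, abs_of_nonneg (by nlinarith)]
    linarith
  · have hfac : t ^ 2 - c = (|t| - √c) * (|t| + √c) := by
      rw [← sq_abs t]; ring_nf; rw [Real.sq_sqrt hc.le]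
    rw [hfac, abs_mul, mul_comm, abs_of_nonneg (by positivity : 0 ≤ |t| + √c)]
    gcongr
    exact le_add_of_nonneg_right (Real.sqrt_nonneg c)

theorem lintegral_inv_sqrt_abs_sq_sub_le {κ c δ : ℝ} (hκ : 0 < κ) (hδ : 0 ≤ δ) :
    ∫⁻ t in {t | κ ≤ |t| ∧ |t ^ 2 - c| < δ}, ENNReal.ofReal (1 / √|t ^ 2 - c|) ≤
      ENNReal.ofReal (8 * √δ / κ) := by
  set d : ℝ → ℝ := fun t => |(|t| - √c)|
  have hdκ : ∀ t, κ ≤ |t| → κ * d t ≤ |t ^ 2 - c| := fun t ht =>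
    (mul_le_mul_of_nonneg_right ht (abs_nonneg _)).trans (abs_mul_abs_abs_sub_sqrt_le t c)
  have hd_meas : Measurable d := by fun_prop
  have hpt : ∀ᵐ t, t ∈ {t | κ ≤ |t| ∧ |t ^ 2 - c| < δ} →
      ENNReal.ofReal (1 / √|t ^ 2 - c|) ≤
        {t | d t < δ / κ}.indicator
          (fun t => ENNReal.ofReal (1 / √κ) * ENNReal.ofReal (1 / √(d t))) t := by
    filter_upwards [volume.ae_ne √c, volume.ae_ne (-√c)] with t hne hne' ⟨htκ, htδ⟩
    have hd : 0 < d t := abs_pos.2 <| sub_ne_zero.2 fun h => by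
      rcases abs_eq (Real.sqrt_nonneg c) |>.1 h with h | h <;> contradiction
    have hdt : t ∈ {t | d t < δ / κ} := by
      change d t < δ / κ
      rw [lt_div_iff₀ hκ, mul_comm]
      exact (hdκ t htκ).trans_lt htδ
    rw [indicator_of_mem hdt, ← ENNReal.ofReal_mul (by positivity)]
    refine ENNReal.ofReal_le_ofReal ?_
    rw [one_div_mul_one_div, ← Real.sqrt_mul hκ.le]
    exact one_div_le_one_div_of_le (by positivity) (Real.sqrt_le_sqrt (hdκ t htκ))
  calc ∫⁻ t in {t | κ ≤ |t| ∧ |t ^ 2 - c| < δ}, ENNReal.ofReal (1 / √|t ^ 2 - c|)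
      ≤ ∫⁻ t, {t | d t < δ / κ}.indicator
          (fun t => ENNReal.ofReal (1 / √κ) * ENNReal.ofReal (1 / √(d t))) t :=
        (setLIntegral_mono_ae ((Measurable.indicator (by fun_prop)
          (measurableSet_lt hd_meas measurable_const)).aemeasurable) hpt).trans
          (setLIntegral_le_lintegral _ _)
    _ = ENNReal.ofReal (1 / √κ) *
          ∫⁻ t in {t | |(|t| - √c)| < δ / κ}, ENNReal.ofReal (1 / √|(|t| - √c)|) := by
        rw [lintegral_indicator (measurableSet_lt hd_meas measurable_const),
          lintegral_const_mul' _ _ ENNReal.ofReal_ne_top]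
    _ ≤ ENNReal.ofReal (1 / √κ) * ENNReal.ofReal (8 * √(δ / κ)) := by
        gcongr; exact lintegral_inv_sqrt_abs_abs_sub_le (by positivity)
    _ = ENNReal.ofReal (8 * √δ / κ) := by
        rw [← ENNReal.ofReal_mul (by positivity), Real.sqrt_div' _ hκ.le]
        congr 1
        field_simp
        rw [Real.sq_sqrt hκ.le, mul_comm]

theorem lintegral_strip_inv_sqrt_le {κ δ b r : ℝ} (hκ : 0 < κ) (hδ : 0 ≤ δ) :
    ∫⁻ y : ℝ × ℝ in {y | |y.1 - b| < r ∧ κ ≤ |y.2| ∧ |y.1 ^ 2 + y.2 ^ 2 - 1| < δ},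
        ENNReal.ofReal (1 / √|y.1 ^ 2 + y.2 ^ 2 - 1|) ≤
      ENNReal.ofReal (16 * r * √δ / κ) := by
  set S : Set (ℝ × ℝ) := {y | |y.1 - b| < r ∧ κ ≤ |y.2| ∧ |y.1 ^ 2 + y.2 ^ 2 - 1| < δ}
  have hS : MeasurableSet S := by measurability
  have hfibre : ∀ y₁, ∫⁻ t, S.indicator (fun y => ENNReal.ofReal (1 / √|y.1 ^ 2 + y.2 ^ 2 - 1|))
      (y₁, t) ≤ (ball b r).indicator (fun _ => ENNReal.ofReal (8 * √δ / κ)) y₁ := by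
    intro y₁
    by_cases hy₁ : y₁ ∈ ball b r
    · have hq : ∀ t : ℝ, y₁ ^ 2 + t ^ 2 - 1 = t ^ 2 - (1 - y₁ ^ 2) := fun t => by ring
      have hF : MeasurableSet {t : ℝ | κ ≤ |t| ∧ |t ^ 2 - (1 - y₁ ^ 2)| < δ} := by measurability
      rw [indicator_of_mem hy₁]
      refine le_of_eq_of_le ?_ (lintegral_inv_sqrt_abs_sq_sub_le (c := 1 - y₁ ^ 2) hκ hδ)
      rw [← lintegral_indicator hF]
      refine lintegral_congr fun t => ?_
      simp only [indicator, S, mem_ofPred_eq, hq, show |y₁ - b| < r from hy₁, true_and]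
    · rw [indicator_of_notMem hy₁,
        lintegral_congr fun t => indicator_of_notMem (fun h => hy₁ h.1) _, lintegral_zero]
  calc ∫⁻ y in S, ENNReal.ofReal (1 / √|y.1 ^ 2 + y.2 ^ 2 - 1|)
      ≤ ∫⁻ y₁, ∫⁻ t, S.indicator (fun y => ENNReal.ofReal (1 / √|y.1 ^ 2 + y.2 ^ 2 - 1|))
          (y₁, t) := by
        rw [← lintegral_indicator hS, Measure.volume_eq_prod]
        exact lintegral_prod_le _
    _ ≤ ∫⁻ y₁, (ball b r).indicator (fun _ => ENNReal.ofReal (8 * √δ / κ)) y₁ :=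
        lintegral_mono hfibre
    _ = ENNReal.ofReal (16 * r * √δ / κ) := by
        rw [lintegral_indicator_const measurableSet_ball, Real.volume_ball,
          ← ENNReal.ofReal_mul (by positivity)]
        ring_nf

theorem lintegral_ball_inter_near_circle_le (z : ℝ × ℝ) {r δ : ℝ} (hδ : 0 ≤ δ)
    (hδ' : δ ≤ 1 / 2) :
    ∫⁻ y in ball z r ∩ {y | |y.1 ^ 2 + y.2 ^ 2 - 1| < δ},
        ENNReal.ofReal (1 / √|y.1 ^ 2 + y.2 ^ 2 - 1|) ≤
      ENNReal.ofReal (64 * r * √δ) := by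
  set w : ℝ × ℝ → ℝ≥0∞ := fun y => ENNReal.ofReal (1 / √|y.1 ^ 2 + y.2 ^ 2 - 1|)
  set strip : ℝ → Set (ℝ × ℝ) :=
    fun b => {y | |y.1 - b| < r ∧ 1 / 2 ≤ |y.2| ∧ |y.1 ^ 2 + y.2 ^ 2 - 1| < δ}
  have hstrip : ∀ b, ∫⁻ y in strip b, w y ≤ ENNReal.ofReal (32 * r * √δ) := fun b => by
    convert lintegral_strip_inv_sqrt_le (b := b) (r := r) one_half_pos hδ using 2
    ring
  have hswap : ∀ b, ∫⁻ y in Prod.swap ⁻¹' strip b, w y = ∫⁻ y in strip b, w y := fun b => by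
    rw [Measure.volume_eq_prod, ← (Measure.measurePreserving_swap (μ := (volume : Measure ℝ))
      (ν := volume)).setLIntegral_comp_preimage_emb MeasurableEquiv.prodComm.measurableEmbedding
        w (strip b)]
    simp only [w, Prod.fst_swap, Prod.snd_swap, add_comm]
  -- one coordinate of a point with `|y|² > 1/2` exceeds `1/2` in absolute value
  have hcover : ball z r ∩ {y | |y.1 ^ 2 + y.2 ^ 2 - 1| < δ} ⊆
      strip z.1 ∪ Prod.swap ⁻¹' strip z.2 := by
    rintro y ⟨hyz, hyδ : |y.1 ^ 2 + y.2 ^ 2 - 1| < δ⟩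
    rw [mem_ball, Prod.dist_eq, max_lt_iff] at hyz
    have hlow := (abs_lt.1 hyδ).1
    by_cases h₂ : 1 / 2 ≤ |y.2|
    · exact Or.inl ⟨hyz.1, h₂, hyδ⟩
    · refine Or.inr ⟨hyz.2, ?_, by rwa [add_comm]⟩
      by_contra h₁
      rw [Prod.snd_swap, not_le, abs_lt] at h₁
      rw [not_le, abs_lt] at h₂
      nlinarith
  calc ∫⁻ y in ball z r ∩ {y | |y.1 ^ 2 + y.2 ^ 2 - 1| < δ}, w y
      ≤ (∫⁻ y in strip z.1, w y) + ∫⁻ y in Prod.swap ⁻¹' strip z.2, w y :=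
        (lintegral_mono_set hcover).trans (lintegral_union_le _ _ _)
    _ ≤ ENNReal.ofReal (32 * r * √δ) + ENNReal.ofReal (32 * r * √δ) := by
        rw [hswap]; exact add_le_add (hstrip _) (hstrip _)
    _ = ENNReal.ofReal (64 * r * √δ) := by
        rw [← two_mul, ← ENNReal.ofReal_ofNat 2, ← ENNReal.ofReal_mul zero_le_two]
        ring_nf

theorem euclNorm_sq (v : ℝ × ℝ) : euclNorm v ^ 2 = v.1 ^ 2 + v.2 ^ 2 :=
  Real.sq_sqrt (by positivity)

theorem dist_le_euclNorm_sub (x y : ℝ × ℝ) : dist y x ≤ euclNorm (x - y) := by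
  rw [Prod.dist_eq, Real.dist_eq, Real.dist_eq, abs_sub_comm y.1, abs_sub_comm y.2, euclNorm,
    Prod.fst_sub, Prod.snd_sub]
  exact max_le (Real.abs_le_sqrt (by nlinarith)) (Real.abs_le_sqrt (by nlinarith))

theorem setLIntegral_div_sqrt_le_of_subset_ball {f : ℝ × ℝ → ℝ} {E : Set (ℝ × ℝ)} {z : ℝ × ℝ}
    {r δ M : ℝ} (hδ : 0 ≤ δ) (hδ' : δ ≤ 1 / 2) (hM : 0 ≤ M)
    (hE : E ⊆ ball z r ∩ {y | |y.1 ^ 2 + y.2 ^ 2 - 1| < δ}) (hf : ∀ᵐ y, y ∈ E → f y ≤ M) :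
    ∫⁻ y in E, ENNReal.ofReal (f y / √|y.1 ^ 2 + y.2 ^ 2 - 1|) ≤
      ENNReal.ofReal (M * (64 * r * √δ)) :=
  calc ∫⁻ y in E, ENNReal.ofReal (f y / √|y.1 ^ 2 + y.2 ^ 2 - 1|)
      ≤ ∫⁻ y in E, ENNReal.ofReal M * ENNReal.ofReal (1 / √|y.1 ^ 2 + y.2 ^ 2 - 1|) := by
        refine setLIntegral_mono_ae (by fun_prop) (hf.mono fun y hy hyE => ?_)
        rw [← ENNReal.ofReal_mul hM, mul_one_div]
        gcongr
        exact hy hyE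
    _ ≤ ENNReal.ofReal M * ∫⁻ y in ball z r ∩ {y | |y.1 ^ 2 + y.2 ^ 2 - 1| < δ},
          ENNReal.ofReal (1 / √|y.1 ^ 2 + y.2 ^ 2 - 1|) := by
        rw [lintegral_const_mul' _ _ ENNReal.ofReal_ne_top]
        exact mul_le_mul_right (lintegral_mono_set hE) _
    _ ≤ ENNReal.ofReal (M * (64 * r * √δ)) := by
        rw [ENNReal.ofReal_mul hM]
        gcongr
        exact lintegral_ball_inter_near_circle_le z hδ hδ'

theorem lintegral_near_circle_le {A ε : ℝ} (hA : 0 ≤ A) (hε : 0 < ε) (hε₁ : ε ≤ 1)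
    {k : ℝ × ℝ → ℂ} {x : ℝ × ℝ} (h₀ : ∀ y, x ≠ y → ‖k y‖ ≤ A / ε ^ 2)
    (h₂ : ∀ y, x ≠ y → ‖k y‖ ≤ A / euclNorm (x - y) ^ 2) :
    ∫⁻ y in {y | |y.1 ^ 2 + y.2 ^ 2 - 1| < ε / 4},
        ENNReal.ofReal (‖k y‖ / √|y.1 ^ 2 + y.2 ^ 2 - 1|) ≤
      ENNReal.ofReal (320 * A / √ε) := by
  set near := {y : ℝ × ℝ | |y.1 ^ 2 + y.2 ^ 2 - 1| < ε / 4}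
  have hδ : 0 ≤ ε / 4 := by positivity
  have hδ' : ε / 4 ≤ 1 / 2 := by linarith
  have hs : 0 < √ε := Real.sqrt_pos.2 hε
  have hsqrt : √(ε / 4) ≤ √ε := Real.sqrt_le_sqrt (by linarith)
  have hcentre : ∫⁻ y in near ∩ {y | euclNorm (x - y) < ε},
      ENNReal.ofReal (‖k y‖ / √|y.1 ^ 2 + y.2 ^ 2 - 1|) ≤ ENNReal.ofReal (64 * A / √ε) := by
    refine (setLIntegral_div_sqrt_le_of_subset_ball hδ hδ' (by positivity)
      (fun y hy => ⟨(dist_le_euclNorm_sub x y).trans_lt hy.2, hy.1⟩)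
      ((volume.ae_ne x).mono fun y hy _ => h₀ y hy.symm)).trans (ENNReal.ofReal_le_ofReal ?_)
    calc A / ε ^ 2 * (64 * ε * √(ε / 4)) ≤ A / ε ^ 2 * (64 * ε * √ε) := by gcongr
      _ = 64 * A / √ε := by
        field_simp
        rw [Real.sq_sqrt hε.le]
  have hshell : ∀ n : ℕ, ∫⁻ y in near ∩ {y | 2 ^ n * ε ≤ euclNorm (x - y) ∧
      euclNorm (x - y) < 2 ^ (n + 1) * ε}, ENNReal.ofReal (‖k y‖ / √|y.1 ^ 2 + y.2 ^ 2 - 1|) ≤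
        ENNReal.ofReal (128 * A / √ε * (1 / 2) ^ n) := by
    intro n
    have hr : 0 < 2 ^ n * ε := by positivity
    have hbound : ∀ y ∈ near ∩ {y | 2 ^ n * ε ≤ euclNorm (x - y) ∧
        euclNorm (x - y) < 2 ^ (n + 1) * ε}, ‖k y‖ ≤ A / (2 ^ n * ε) ^ 2 := by
      rintro y ⟨-, hyn, -⟩
      have hxy : x ≠ y := by
        rintro rfl
        rw [sub_self, show euclNorm 0 = 0 by simp [euclNorm]] at hyn
        linarith
      exact (h₂ y hxy).trans (by gcongr)
    refine (setLIntegral_div_sqrt_le_of_subset_ball hδ hδ' (by positivity)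
      (fun y hy => ⟨(dist_le_euclNorm_sub x y).trans_lt hy.2.2, hy.1⟩)
      (ae_of_all _ hbound)).trans (ENNReal.ofReal_le_ofReal ?_)
    calc A / (2 ^ n * ε) ^ 2 * (64 * (2 ^ (n + 1) * ε) * √(ε / 4))
        ≤ A / (2 ^ n * ε) ^ 2 * (64 * (2 ^ (n + 1) * ε) * √ε) := by gcongr
      _ = 128 * A / √ε * (1 / 2) ^ n := by
        rw [one_div_pow]
        field_simp
        rw [Real.sq_sqrt hε.le]
        ring
  calc ∫⁻ y in near, ENNReal.ofReal (‖k y‖ / √|y.1 ^ 2 + y.2 ^ 2 - 1|)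
      ≤ ENNReal.ofReal (64 * A / √ε) + ∑' n : ℕ, ENNReal.ofReal (128 * A / √ε * (1 / 2) ^ n) :=
        (lintegral_le_add_tsum_dyadic _ _ _ hε).trans
          (add_le_add hcentre (ENNReal.tsum_le_tsum hshell))
    _ = ENNReal.ofReal (320 * A / √ε) := by
        rw [← ENNReal.ofReal_tsum_of_nonneg (fun n => by positivity)
          ((summable_geometric_two).mul_left _), tsum_mul_left, tsum_geometric_two,
          ← ENNReal.ofReal_add (by positivity) (by positivity)]
        ring_nf

/-- **Mollifier estimate against the inverse square root of the distance to the unit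
circle.** For every `A > 0` there is a constant `C > 0`, depending only on `A`, such that
for every `ε ∈ (0,1]` and every measurable kernel `χ` satisfying the `ε`-mollifier bounds
(i) `∫ |χ(x,y)| dy ≤ A` and (ii) `|χ(x,y)| ≤ A ε^{−2} (ε/|x−y|)^N` for `N = 0,1,2,3`,
one has `∫_{ℝ²} |χ(x,y)| ||y|² − 1|^{−1/2} dy ≤ C ε^{−1/2}` for every `x`. -/
theorem mollifier_singular_estimate
    (A : ℝ) (hA : 0 < A) :
    ∃ C : ℝ, 0 < C ∧
      ∀ ε : ℝ, ε ∈ Set.Ioc (0 : ℝ) 1 →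
        ∀ χ : ℝ × ℝ → ℝ × ℝ → ℂ,
          Measurable (fun p : (ℝ × ℝ) × (ℝ × ℝ) => χ p.1 p.2) →
          (∀ x : ℝ × ℝ,
            (∫⁻ y : ℝ × ℝ, ENNReal.ofReal ‖χ x y‖) ≤ ENNReal.ofReal A) →
          (∀ x y : ℝ × ℝ, x ≠ y → ∀ N : ℕ, N ≤ 3 →
            ‖χ x y‖ ≤ A / ε ^ 2 * (ε / euclNorm (x - y)) ^ N) →
          ∀ x : ℝ × ℝ,
            (∫⁻ y : ℝ × ℝ,
                ENNReal.ofReal (‖χ x y‖ / Real.sqrt |euclNorm y ^ 2 - 1|)) ≤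
              ENNReal.ofReal (C / Real.sqrt ε) := by
  refine ⟨322 * A, by positivity, fun ε ⟨hε, hε₁⟩ χ _ hχ_int hχ_decay x => ?_⟩
  have h₀ : ∀ y, x ≠ y → ‖χ x y‖ ≤ A / ε ^ 2 := fun y hxy => by
    simpa using hχ_decay x y hxy 0 (by norm_num)
  have h₂ : ∀ y, x ≠ y → ‖χ x y‖ ≤ A / euclNorm (x - y) ^ 2 := fun y hxy => by
    have := hχ_decay x y hxy 2 (by norm_num)
    rwa [div_pow, div_mul_div_comm, mul_comm (ε ^ 2), mul_div_mul_right _ _ (by positivity)]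
      at this
  have hsqrt : √(ε / 4) = √ε / 2 := by
    rw [Real.sqrt_div' _ (by norm_num), show (4 : ℝ) = 2 ^ 2 by norm_num,
      Real.sqrt_sq zero_le_two]
  have hq : Measurable fun y : ℝ × ℝ => y.1 ^ 2 + y.2 ^ 2 - 1 := by fun_prop
  simp only [euclNorm_sq]
  rw [← lintegral_add_compl _ (measurableSet_lt hq.abs measurable_const :
    MeasurableSet {y : ℝ × ℝ | |y.1 ^ 2 + y.2 ^ 2 - 1| < ε / 4})]
  calc _ ≤ ENNReal.ofReal (320 * A / √ε) + ENNReal.ofReal A * ENNReal.ofReal (1 / √(ε / 4)) :=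
        add_le_add (lintegral_near_circle_le hA.le hε hε₁ h₀ h₂)
          ((setLIntegral_compl_div_sqrt_le hq (by positivity)).trans (by gcongr; exact hχ_int x))
    _ = ENNReal.ofReal (322 * A / √ε) := by
        rw [← ENNReal.ofReal_mul hA.le, ← ENNReal.ofReal_add (by positivity) (by positivity),
          hsqrt]
        congr 1
        field_simp
        ring

end
end
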